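/- arXiv:1611.08289 — 8 statements merged into one kernel-verified Lean document; each statement's English description precedes it below -/
import Mathlib

section
/- For every Tychonoff space X, the hyperspace S_c(X) of nontrivial convergent sequences with the Vietoris topology is nowhere locally compact: no point of S_c(X) has a compact neighborhood. -/
open Set TopologicalSpace Filter

/-- The Vietoris topology on collections of subsets of `X`. -/
def vietoris (X : Type*) [TopologicalSpace X] : TopologicalSpace (Set X) :=
  TopologicalSpace.generateFrom
    ({t | ∃ U : Set X, IsOpen U ∧ t = {S : Set X | S ⊆ U}} ∪
     {t | ∃ U : Set X, IsOpen U ∧ t = {S : Set X | (S ∩ U).Nonempty}})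

/-- The set `S` converges to `x`: `x ∈ S` and `S \ U` is finite for every open
neighborhood `U` of `x`. -/
def ConvTo {X : Type*} [TopologicalSpace X] (S : Set X) (x : X) : Prop :=
  x ∈ S ∧ ∀ U : Set X, IsOpen U → x ∈ U → (S \ U).Finite

/-- `S` is a nontrivial convergent sequence in `X`: a countably infinite closed set with a
unique non-isolated point `x` (all other points are isolated in `S`), converging to `x`. -/
def IsNCS (X : Type*) [TopologicalSpace X] (S : Set X) : Prop :=
  S.Infinite ∧ S.Countable ∧ IsClosed S ∧ ∃ x : X, ConvTo S x ∧
    (∀ y ∈ S, y ≠ x → ∃ U : Set X, IsOpen U ∧ U ∩ S = {y}) ∧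
    ¬ ∃ U : Set X, IsOpen U ∧ U ∩ S = {x}

/-- The hyperspace of nontrivial convergent sequences of `X`. -/
def Sc (X : Type*) [TopologicalSpace X] : Type _ :=
  {S : Set X // IsNCS X S}

instance (X : Type*) [TopologicalSpace X] : TopologicalSpace (Sc X) :=
  TopologicalSpace.induced (fun S : Sc X => S.1) (vietoris X)

/-- Removing a finite set of isolated points (not containing the limit) from a nontrivial
convergent sequence yields a nontrivial convergent sequence. -/
lemma isNCS_diff {X : Type*} [TopologicalSpace X] {S : Set X} {x : X}
    (hSinf : S.Infinite) (hScnt : S.Countable) (hScl : IsClosed S)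
    (hconv : ConvTo S x)
    (hiso : ∀ y ∈ S, y ≠ x → ∃ U : Set X, IsOpen U ∧ U ∩ S = {y})
    {G : Set X} (hGfin : G.Finite) (hG : G ⊆ S) (hGx : x ∉ G) :
    IsNCS X (S \ G) := by
  have hxS : x ∈ S := hconv.1
  -- isolating opens for points of G
  have hGiso : ∀ g ∈ G, ∃ U : Set X, IsOpen U ∧ U ∩ S = {g} := by
    intro g hg
    exact hiso g (hG hg) (fun h => hGx (h ▸ hg))
  choose! U hUo hUS using hGiso
  refine ⟨hSinf.diff hGfin, hScnt.mono diff_subset, ?_, x, ⟨⟨hxS, hGx⟩, ?_⟩, ?_, ?_⟩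
  · -- closed
    have hcompl : (S \ G)ᶜ = Sᶜ ∪ ⋃ g ∈ G, U g := by
      ext a
      simp only [mem_compl_iff, mem_diff, mem_union, mem_iUnion, exists_prop]
      constructor
      · intro h
        by_cases haS : a ∈ S
        · have haG : a ∈ G := by
            by_contra hh; exact h ⟨haS, hh⟩
          exact Or.inr ⟨a, haG, by
            have := hUS a haG
            have : a ∈ U a ∩ S := by rw [this]; exact rfl
            exact this.1⟩
        · exact Or.inl haS
      · rintro (h | ⟨g, hgG, hgU⟩)
        · intro hh; exact h hh.1
        · intro hh
          have : a ∈ U g ∩ S := ⟨hgU, hh.1⟩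
          rw [hUS g hgG] at this
          exact hh.2 (this ▸ hgG)
    rw [← isOpen_compl_iff, hcompl]
    exact (hScl.isOpen_compl).union (isOpen_biUnion (fun g hg => hUo g hg))
  · -- convergence
    intro V hVo hxV
    exact (hconv.2 V hVo hxV).subset (diff_subset_diff_left diff_subset)
  · -- isolated points
    intro y hy hyx
    obtain ⟨V, hVo, hVS⟩ := hiso y hy.1 hyx
    refine ⟨V, hVo, ?_⟩
    apply Subset.antisymm
    · intro a ha
      have : a ∈ V ∩ S := ⟨ha.1, ha.2.1⟩
      rw [hVS] at this; exact this
    · have hyV : y ∈ V := by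
        have h2 : y ∈ V ∩ S := hVS ▸ rfl
        exact h2.1
      intro a ha
      rw [mem_singleton_iff.mp ha]
      exact ⟨hyV, hy⟩
  · -- x not isolated
    rintro ⟨V, hVo, hVx⟩
    have hxV : x ∈ V := by
      have : x ∈ V ∩ (S \ G) := hVx ▸ rfl
      exact this.1
    have hsub : V ∩ S ⊆ insert x G := by
      intro a ⟨haV, haS⟩
      by_cases haG : a ∈ G
      · exact mem_insert_of_mem _ haG
      · have : a ∈ V ∩ (S \ G) := ⟨haV, haS, haG⟩
        rw [hVx] at this
        exact mem_insert_iff.mpr (Or.inl this)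
    have hfin : (V ∩ S).Finite := (hGfin.insert x).subset hsub
    have : S.Finite := by
      have : S ⊆ (S \ V) ∪ (V ∩ S) := by
        intro a ha
        by_cases h : a ∈ V
        · exact Or.inr ⟨h, ha⟩
        · exact Or.inl ⟨ha, h⟩
      exact ((hconv.2 V hVo hxV).union hfin).subset this
    exact hSinf this

/-- For every Tychonoff space `X`, the hyperspace `S_c(X)` is nowhere
locally compact: no point has a neighborhood with compact closure. -/
theorem stmt3 {X : Type*} [TopologicalSpace X] [T35Space X]
    (S : Sc X) (O : Set (Sc X)) (hO : O ∈ nhds S) :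
    ¬ IsCompact (closure O) := by
  classical
  intro hC
  obtain ⟨hSinf, hScnt, hScl, x, hconv, hiso, hniso⟩ := S.2
  letI tv : TopologicalSpace (Set X) := vietoris X
  set 𝒮 : Set (Set (Set X)) :=
    ({t | ∃ U : Set X, IsOpen U ∧ t = {S : Set X | S ⊆ U}} ∪
     {t | ∃ U : Set X, IsOpen U ∧ t = {S : Set X | (S ∩ U).Nonempty}}) with h𝒮
  -- extract a basic Vietoris neighborhood inside O
  have hO' : O ∈ @nhds _ (TopologicalSpace.induced (fun S : Sc X => S.1) tv) S := hO
  rw [mem_nhds_induced] at hO'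
  obtain ⟨u, hu, husub⟩ := hO'
  have hbasis : IsTopologicalBasis ((fun f : Set (Set (Set X)) => ⋂₀ f) '' { f : Set (Set (Set X)) | f.Finite ∧ f ⊆ 𝒮 }) :=
    isTopologicalBasis_of_subbasis rfl
  obtain ⟨t, ⟨fs, ⟨hffin, hfsub⟩, rfl⟩, hSt, htu⟩ := hbasis.mem_nhds_iff.mp hu
  -- for each basic set, choose a witness point of S guaranteeing membership
  have hwit : ∀ t ∈ fs, ∃ a ∈ S.1, ∀ S' : Set X, S' ⊆ S.1 → a ∈ S' → S' ∈ t := by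
    intro t ht
    rcases hfsub ht with ⟨U, hU, rfl⟩ | ⟨U, hU, rfl⟩
    · have hSU : S.1 ⊆ U := hSt _ ht
      obtain ⟨a, ha⟩ := hSinf.nonempty
      exact ⟨a, ha, fun S' hS' _ => hS'.trans hSU⟩
    · have hne : (S.1 ∩ U).Nonempty := hSt _ ht
      obtain ⟨a, haS, haU⟩ := hne
      exact ⟨a, haS, fun S' _ haS' => ⟨a, haS', haU⟩⟩
  choose a ha1 ha2 using hwit
  haveI := hffin.to_subtype
  set F : Set X := range (fun t : fs => a t.1 t.2) with hF
  have hFfin : F.Finite := finite_range _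
  have hFS : F ⊆ S.1 := by rintro _ ⟨t, rfl⟩; exact ha1 t.1 t.2
  -- enumerate the rest of S
  set R : Set X := S.1 \ insert x F with hR
  have hRinf : R.Infinite := hSinf.diff (hFfin.insert x)
  obtain ⟨e, he⟩ := (hScnt.mono diff_subset).exists_eq_range hRinf.nonempty
  set G : ℕ → Set X := fun n => e '' Iio n with hG
  have hGR : ∀ n, G n ⊆ R := by
    rintro n _ ⟨m, _, rfl⟩
    show e m ∈ (S.1 : Set X) \ insert x F
    rw [he]; exact mem_range_self m
  have hGfin : ∀ n, (G n).Finite := fun n => (finite_Iio n).image e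
  set T : ℕ → Set X := fun n => S.1 \ G n with hT
  have hTncs : ∀ n, IsNCS X (T n) := by
    intro n
    refine isNCS_diff hSinf hScnt hScl hconv hiso (hGfin n)
      (fun g hg => ((hGR n) hg).1) (fun hx => ((hGR n) hx).2 (mem_insert _ _))
  have hTS : ∀ n, T n ⊆ S.1 := fun n => diff_subset
  have hFT : ∀ n, F ⊆ T n := by
    intro n y hy
    exact ⟨hFS hy, fun hyG => ((hGR n) hyG).2 (mem_insert_of_mem _ hy)⟩
  have hTO : ∀ n, (⟨T n, hTncs n⟩ : Sc X) ∈ O := by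
    intro n
    apply husub
    apply htu
    intro t ht
    exact ha2 t ht (T n) (hTS n) (hFT n ⟨⟨t, ht⟩, rfl⟩)
  -- the sequence of points of Sc X
  set g : ℕ → Sc X := fun n => ⟨T n, hTncs n⟩ with hg
  have hle : Filter.map g atTop ≤ Filter.principal (closure O) := by
    rw [le_principal_iff, mem_map]
    exact Eventually.of_forall (fun n => subset_closure (hTO n))
  obtain ⟨Tc, _, hclT⟩ := hC hle
  -- pick a point of Tc outside the finite set insert x F
  obtain ⟨y, hyT, hyxF⟩ := (Tc.2.1.diff (hFfin.insert x)).nonempty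
  -- find an open W around y eventually avoiding all T n
  have hW : ∃ W : Set X, IsOpen W ∧ y ∈ W ∧ ∃ N : ℕ, ∀ n ≥ N, T n ∩ W = ∅ := by
    by_cases hyS : y ∈ S.1
    · have hyx : y ≠ x := fun h => hyxF (h ▸ mem_insert _ _)
      obtain ⟨W, hWo, hWS⟩ := hiso y hyS hyx
      have hyW : y ∈ W := by
        have : y ∈ W ∩ S.1 := hWS ▸ rfl
        exact this.1
      have hyR : y ∈ range e := by rw [← he]; exact ⟨hyS, hyxF⟩
      obtain ⟨m, rfl⟩ := hyR
      refine ⟨W, hWo, hyW, m + 1, fun n hn => ?_⟩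
      ext z
      simp only [mem_inter_iff, mem_empty_iff_false, iff_false]
      rintro ⟨⟨hzS, hzG⟩, hzW⟩
      have : z ∈ W ∩ S.1 := ⟨hzW, hzS⟩
      rw [hWS] at this
      rw [mem_singleton_iff] at this
      subst this
      exact hzG ⟨m, lt_of_lt_of_le (Nat.lt_succ_self m) hn, rfl⟩
    · refine ⟨S.1ᶜ, hScl.isOpen_compl, hyS, 0, fun n _ => ?_⟩
      ext z
      simp only [mem_inter_iff, mem_compl_iff, mem_empty_iff_false, iff_false]
      rintro ⟨hz, hz'⟩
      exact hz' hz.1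
  obtain ⟨W, hWo, hyW, N, hN⟩ := hW
  -- the Vietoris open set of sets meeting W
  set V : Set (Set X) := {S' : Set X | (S' ∩ W).Nonempty} with hV
  have hVo : @IsOpen _ tv V :=
    isOpen_generateFrom_of_mem (Or.inr ⟨W, hWo, rfl⟩)
  have hcont : Continuous (fun S : Sc X => S.1) := continuous_induced_dom
  have hVsub : IsOpen ((fun S : Sc X => S.1) ⁻¹' V) := hVo.preimage hcont
  have hTcV : Tc ∈ (fun S : Sc X => S.1) ⁻¹' V := ⟨y, hyT, hyW⟩
  have hmem : ((fun S : Sc X => S.1) ⁻¹' V) ∈ nhds Tc := hVsub.mem_nhds hTcV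
  have hfreq := clusterPt_iff_nonempty.mp hclT hmem (image_mem_map (Ici_mem_atTop N))
  obtain ⟨z, hzV, n, hn, rfl⟩ := hfreq
  obtain ⟨w, hw1, hw2⟩ := hzV
  have : w ∈ T n ∩ W := ⟨hw1, hw2⟩
  rw [hN n hn] at this
  exact this
end

section
/- If X is a crowded (i.e., has no isolated points) Tychonoff space, then the hyperspace S_c(X) of nontrivial convergent sequences with the Vietoris topology is meager in itself (a countable union of nowhere dense subsets of itself). -/
open Set TopologicalSpace Filter

/-! ### Auxiliary lemmas -/

section Aux

variable {X : Type*} [TopologicalSpace X]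

/-- The subbasis generating the Vietoris topology. -/
def vsb (X : Type*) [TopologicalSpace X] : Set (Set (Set X)) :=
  {t | ∃ U : Set X, IsOpen U ∧ t = {S : Set X | S ⊆ U}} ∪
    {t | ∃ U : Set X, IsOpen U ∧ t = {S : Set X | (S ∩ U).Nonempty}}

lemma vopen_basic {t : Set (Set X)} (ht : t ∈ vsb X) : @IsOpen _ (vietoris X) t :=
  TopologicalSpace.isOpen_generateFrom_of_mem ht

lemma vopen_hit {U : Set X} (hU : IsOpen U) :
    @IsOpen _ (vietoris X) {S : Set X | (S ∩ U).Nonempty} :=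
  vopen_basic (Or.inr ⟨U, hU, rfl⟩)

lemma vopen_inter {s t : Set (Set X)} (hs : @IsOpen _ (vietoris X) s)
    (ht : @IsOpen _ (vietoris X) t) : @IsOpen _ (vietoris X) (s ∩ t) := by
  letI : TopologicalSpace (Set X) := vietoris X
  exact hs.inter ht

lemma vopen_biInter {ι : Type*} {Q : Finset ι} {f : ι → Set (Set X)}
    (h : ∀ a ∈ Q, @IsOpen _ (vietoris X) (f a)) :
    @IsOpen _ (vietoris X) (⋂ a ∈ Q, f a) := by
  letI : TopologicalSpace (Set X) := vietoris X
  exact isOpen_biInter_finset h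

lemma scOpen {t : Set (Set X)} (ht : @IsOpen _ (vietoris X) t) :
    IsOpen {S : Sc X | S.1 ∈ t} :=
  (@isOpen_induced_iff (Sc X) (Set X) (vietoris X) _ (fun S : Sc X => S.1)).mpr ⟨t, ht, rfl⟩

lemma scOpen_iff {W : Set (Sc X)} :
    IsOpen W ↔ ∃ t, @IsOpen _ (vietoris X) t ∧ (fun S : Sc X => S.1) ⁻¹' t = W :=
  @isOpen_induced_iff (Sc X) (Set X) (vietoris X) W (fun S : Sc X => S.1)

/-- In a crowded T1 space, every nonempty open set is infinite. -/
lemma open_infinite [T1Space X] (hcr : ∀ x : X, ¬ IsOpen ({x} : Set X))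
    {U : Set X} (hU : IsOpen U) (hne : U.Nonempty) : U.Infinite := by
  by_contra hninf
  rw [Set.not_infinite] at hninf
  have hfin := hninf
  obtain ⟨u, hu⟩ := hne
  have h1 : ({u} : Set X) = U ∩ (U \ {u})ᶜ := by
    ext w; constructor
    · rintro rfl; exact ⟨hu, fun hw => hw.2 rfl⟩
    · rintro ⟨hwU, hw⟩
      by_contra hne'
      exact hw ⟨hwU, hne'⟩
  have : IsOpen ({u} : Set X) := by
    rw [h1]; exact hU.inter (((hfin.diff).isClosed.isOpen_compl))
  exact hcr u this

/-- In a crowded T1 space, a nonempty open set minus an NCS is infinite. -/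
lemma diff_ncs_infinite [T1Space X] (hcr : ∀ x : X, ¬ IsOpen ({x} : Set X))
    {U S : Set X} (hU : IsOpen U) (hne : U.Nonempty) (hS : IsNCS X S) :
    (U \ S).Infinite := by
  by_contra hninf
  rw [Set.not_infinite] at hninf
  have hfin := hninf
  obtain ⟨-, -, -, x, -, hiso, -⟩ := hS
  have hUinf := open_infinite hcr hU hne
  set W := U \ ((U \ S) ∪ {x}) with hW
  have hWopen : IsOpen W := hU.sdiff ((hfin.union (Set.finite_singleton x)).isClosed)
  have hWinf : W.Infinite := hUinf.diff (hfin.union (Set.finite_singleton x))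
  obtain ⟨v, hv⟩ := hWinf.nonempty
  have hvU : v ∈ U := hv.1
  have hvS : v ∈ S := by
    by_contra hvS
    exact hv.2 (Or.inl ⟨hvU, hvS⟩)
  have hvx : v ≠ x := fun h => hv.2 (Or.inr h)
  obtain ⟨V, hVopen, hVS⟩ := hiso v hvS hvx
  have h1 : ({v} : Set X) = V ∩ W := by
    apply Subset.antisymm
    · intro w hw
      rw [Set.mem_singleton_iff] at hw
      subst hw
      have h2 : w ∈ V ∩ S := by rw [hVS]; exact rfl
      exact ⟨h2.1, hv⟩
    · rintro w ⟨hwV, hwW⟩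
      have hwS : w ∈ S := by
        by_contra hwS
        exact hwW.2 (Or.inl ⟨hwW.1, hwS⟩)
      have : w ∈ V ∩ S := ⟨hwV, hwS⟩
      rwa [hVS] at this
  exact hcr v (by rw [h1]; exact hVopen.inter hWopen)

/-- Adding a new point to an NCS gives an NCS. -/
lemma IsNCS.insert [T1Space X] {S : Set X} (hS : IsNCS X S) {v : X} (hv : v ∉ S) :
    IsNCS X (Insert.insert v S) := by
  obtain ⟨hinf, hcnt, hcl, x, hconv, hiso, hniso⟩ := hS
  have hxS : x ∈ S := hconv.1
  have hxv : x ≠ v := fun h => hv (h ▸ hxS)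
  refine ⟨hinf.mono (subset_insert _ _), hcnt.insert v, ?_, x, ?_, ?_, ?_⟩
  · rw [Set.insert_eq]
    exact isClosed_singleton.union hcl
  · refine ⟨Or.inr hxS, fun U hU hxU => ?_⟩
    have := (hconv.2 U hU hxU).insert v
    apply this.subset
    rintro w ⟨(rfl | hwS), hwU⟩
    · exact Or.inl rfl
    · exact Or.inr ⟨hwS, hwU⟩
  · rintro y (rfl | hyS) hyx
    · refine ⟨Sᶜ, hcl.isOpen_compl, ?_⟩
      ext w
      simp only [Set.mem_inter_iff, Set.mem_compl_iff, Set.mem_insert_iff,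
        Set.mem_singleton_iff]
      constructor
      · rintro ⟨hwS, (rfl | hwS')⟩
        · rfl
        · exact absurd hwS' hwS
      · rintro rfl; exact ⟨hv, Or.inl rfl⟩
    · obtain ⟨U, hU, hUS⟩ := hiso y hyS hyx
      have hyv : y ≠ v := fun h => hv (h ▸ hyS)
      refine ⟨U \ {v}, hU.sdiff isClosed_singleton, ?_⟩
      have hyU : y ∈ U := by
        have : y ∈ U ∩ S := hUS ▸ rfl
        exact this.1
      ext w
      simp only [Set.mem_inter_iff, Set.mem_diff, Set.mem_singleton_iff,
        Set.mem_insert_iff]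
      constructor
      · rintro ⟨⟨hwU, hwv⟩, (rfl | hwS)⟩
        · exact absurd rfl hwv
        · have : w ∈ U ∩ S := ⟨hwU, hwS⟩
          rwa [hUS] at this
      · rintro rfl
        exact ⟨⟨hyU, hyv⟩, Or.inr hyS⟩
  · rintro ⟨U, hU, hUx⟩
    apply hniso
    refine ⟨U \ {v}, hU.sdiff isClosed_singleton, ?_⟩
    have hxU : x ∈ U := by
      have : x ∈ U ∩ Insert.insert v S := hUx ▸ rfl
      exact this.1
    apply Subset.antisymm
    · rintro w ⟨⟨hwU, hwv⟩, hwS⟩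
      have : w ∈ U ∩ Insert.insert v S := ⟨hwU, Or.inr hwS⟩
      rwa [hUx] at this
    · rintro w rfl
      exact ⟨⟨hxU, hxv⟩, hxS⟩

/-- Adding finitely many new points to an NCS gives an NCS. -/
lemma IsNCS.union_finset [T1Space X] {S : Set X} (hS : IsNCS X S) (P : Finset X)
    (hd : ∀ a ∈ P, a ∉ S) : IsNCS X (S ∪ ↑P) := by
  classical
  induction P using Finset.induction_on with
  | empty => simpa using hS
  | @insert a P' ha ih =>
    have h1 : S ∪ ↑(Insert.insert a P') = Insert.insert a (S ∪ ↑P') := by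
      rw [Finset.coe_insert, Set.union_insert]
    rw [h1]
    have h2 : a ∉ S ∪ ↑P' := by
      rintro (h | h)
      · exact hd a (Finset.mem_insert_self a P') h
      · exact ha h
    exact (ih fun b hb => hd b (Finset.mem_insert_of_mem hb)).insert h2

lemma nwd_of_forall {α : Type*} [TopologicalSpace α] {s : Set α}
    (h : ∀ P, IsOpen P → P.Nonempty → ∃ R, IsOpen R ∧ R.Nonempty ∧ R ⊆ P ∧ R ∩ s = ∅) :
    IsNowhereDense s := by
  rw [IsNowhereDense]
  by_contra hne
  obtain ⟨R, hRo, hRne, hRsub, hRs⟩ := h (interior (closure s)) isOpen_interior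
    (Set.nonempty_iff_ne_empty.mpr hne)
  have hsub : s ⊆ Rᶜ := by
    intro w hw hwR
    have hmem : w ∈ R ∩ s := ⟨hwR, hw⟩
    rw [hRs] at hmem
    exact hmem
  have h1 : closure s ⊆ Rᶜ := closure_minimal hsub hRo.isClosed_compl
  obtain ⟨r, hr⟩ := hRne
  exact h1 (interior_subset (hRsub hr)) hr

lemma nwd_forall {α : Type*} [TopologicalSpace α] {s : Set α} (h : IsNowhereDense s) :
    ∀ P, IsOpen P → P.Nonempty → ∃ R, IsOpen R ∧ R.Nonempty ∧ R ⊆ P ∧ R ∩ s = ∅ := by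
  intro P hP hPne
  have h1 : ¬ P ⊆ closure s := by
    intro hsub
    have := interior_maximal hsub hP
    rw [h] at this
    exact hPne.ne_empty (Set.subset_empty_iff.mp this)
  obtain ⟨x, hxP, hxcl⟩ := Set.not_subset.mp h1
  refine ⟨P ∩ (closure s)ᶜ, hP.inter (isClosed_closure.isOpen_compl), ⟨x, hxP, hxcl⟩,
    Set.inter_subset_left, ?_⟩
  apply Set.subset_empty_iff.mp
  rintro w ⟨⟨-, hw2⟩, hws⟩
  exact hw2 (subset_closure hws)

lemma nwd_clDiff {α : Type*} [TopologicalSpace α] {G : Set α} (hG : IsOpen G) :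
    IsNowhereDense (closure G \ G) := by
  apply nwd_of_forall
  intro P hP hPne
  by_cases hPG : (P ∩ G).Nonempty
  · refine ⟨P ∩ G, hP.inter hG, hPG, Set.inter_subset_left, ?_⟩
    apply Set.subset_empty_iff.mp
    rintro w ⟨⟨-, hwG⟩, -, hwG'⟩
    exact hwG' hwG
  · refine ⟨P, hP, hPne, subset_rfl, ?_⟩
    have hPcl : P ∩ closure G = ∅ := by
      apply Set.subset_empty_iff.mp
      rintro w ⟨hwP, hwcl⟩
      have h1 : closure G ⊆ Pᶜ := closure_minimal
        (fun z hz hzP => hPG ⟨z, hzP, hz⟩) hP.isClosed_compl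
      exact h1 hwcl hwP
    apply Set.subset_empty_iff.mp
    rintro w ⟨hwP, hwcl, -⟩
    exact (Set.subset_empty_iff.mpr hPcl) ⟨hwP, hwcl⟩ |>.elim

end Aux

section Main

variable {X : Type*} [TopologicalSpace X]

/-- The collection of sequences having exactly `n ≥ 1` points inside an open set `H` is
nowhere dense in `S_c(X)` when `X` is crowded. -/
lemma nwd_exact [T2Space X] (hcr : ∀ x : X, ¬ IsOpen ({x} : Set X))
    {H : Set X} (hH : IsOpen H) {n : ℕ} (hn : 1 ≤ n) :
    IsNowhereDense {S : Sc X | (S.1 ∩ H).Finite ∧ (S.1 ∩ H).ncard = n} := by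
  classical
  apply nwd_of_forall
  intro P hP hPne
  obtain ⟨P', hP'o, rfl⟩ := scOpen_iff.mp hP
  obtain ⟨T, hT⟩ := hPne
  have hTP' : T.1 ∈ P' := hT
  have hbasis := @TopologicalSpace.isTopologicalBasis_of_subbasis (Set X) (vietoris X)
    (vsb X) rfl
  obtain ⟨v, ⟨F, ⟨hFfin, hFsub⟩, rfl⟩, hTv, hvP'⟩ :=
    @TopologicalSpace.IsTopologicalBasis.exists_subset_of_mem_open (Set X) (vietoris X) _
      hbasis T.1 P' hTP' hP'o
  -- choose witnesses for the subbasic sets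
  have hforms : ∀ t ∈ F, ∃ U : Set X, IsOpen U ∧
      (t = {S : Set X | S ⊆ U} ∨ t = {S : Set X | (S ∩ U).Nonempty}) := by
    intro t ht
    rcases hFsub ht with ⟨U, hU, h⟩ | ⟨U, hU, h⟩
    · exact ⟨U, hU, Or.inl h⟩
    · exact ⟨U, hU, Or.inr h⟩
  choose! g hgo hgd using hforms
  have hFopen : ∀ t ∈ F, @IsOpen _ (vietoris X) t := fun t ht => vopen_basic (hFsub ht)
  have hFIopen : @IsOpen _ (vietoris X) (⋂₀ F) :=
    @Set.Finite.isOpen_sInter (Set X) (vietoris X) F hFfin hFopen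
  set U : Set X := ⋂₀ (g '' {t ∈ F | t = {S : Set X | S ⊆ g t}}) with hUdef
  have hUopen : IsOpen U := by
    apply Set.Finite.isOpen_sInter ((hFfin.subset (Set.sep_subset _ _)).image g)
    rintro _ ⟨t, ⟨htF, -⟩, rfl⟩
    exact hgo t htF
  have hsubU : ∀ S : Set X, S ∈ ⋂₀ F → S ⊆ U := by
    intro S hS
    apply Set.subset_sInter
    rintro _ ⟨t, ⟨htF, hteq⟩, rfl⟩
    have := hS t htF
    rwa [hteq] at this
  by_cases hUH : (U ∩ H).Nonempty
  · -- augment T by n+1 fresh points of U ∩ H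
    have hinf : ((U ∩ H) \ T.1).Infinite :=
      diff_ncs_infinite hcr (hUopen.inter hH) hUH T.2
    obtain ⟨Q, hQsub, hQcard⟩ := hinf.exists_subset_card_eq (n + 1)
    set T' : Set X := T.1 ∪ ↑Q with hT'def
    have hT'ncs : IsNCS X T' := T.2.union_finset Q (fun a ha => ((hQsub ha).2 : a ∉ T.1))
    have hT'F : T' ∈ ⋂₀ F := by
      intro t htF
      rcases hgd t htF with hsub | hhit
      · rw [hsub]
        apply Set.union_subset
        · have := hTv t htF
          rwa [hsub] at this
        · intro a ha
          have haU : a ∈ U := ((hQsub ha).1 : a ∈ U ∩ H).1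
          exact haU (g t) ⟨t, ⟨htF, hsub⟩, rfl⟩
      · rw [hhit]
        have := hTv t htF
        rw [hhit] at this
        exact this.mono (Set.inter_subset_inter_left _ Set.subset_union_left)
    -- separate the fresh points by disjoint open sets inside H
    obtain ⟨Gm, hGm, hGmdisj⟩ := (Q : Set X).toFinite.t2_separation
    set R' : Set (Set X) := ⋂₀ F ∩ ⋂ a ∈ Q, {S : Set X | (S ∩ (Gm a ∩ H)).Nonempty}
      with hR'def
    have hR'open : @IsOpen _ (vietoris X) R' :=
      vopen_inter hFIopen (vopen_biInter fun a _ => vopen_hit ((hGm a).2.inter hH))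
    have hT'R' : T' ∈ R' := by
      refine ⟨hT'F, ?_⟩
      apply Set.mem_biInter
      intro a ha
      have haH : a ∈ H := ((hQsub ha).1 : a ∈ U ∩ H).2
      exact ⟨a, Or.inr ha, (hGm a).1, haH⟩
    refine ⟨{S : Sc X | S.1 ∈ R'}, scOpen hR'open, ⟨⟨T', hT'ncs⟩, hT'R'⟩, ?_, ?_⟩
    · intro S hS
      exact hvP' (hS.1 : S.1 ∈ ⋂₀ F)
    · apply Set.subset_empty_iff.mp
      rintro S ⟨⟨-, hShit⟩, hSfin, hScard⟩
      have hsel : ∀ a ∈ Q, ∃ z, z ∈ S.1 ∩ (Gm a ∩ H) := by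
        intro a ha
        exact Set.mem_iInter₂.mp hShit a ha
      choose! y hy using hsel
      have hmaps : ∀ a ∈ Q, y a ∈ hSfin.toFinset := by
        intro a ha
        rw [Set.Finite.mem_toFinset]
        exact ⟨(hy a ha).1, (hy a ha).2.2⟩
      have hinj : Set.InjOn y ↑Q := by
        intro a ha b hb hab
        by_contra hne
        have hd := hGmdisj ha hb hne
        have h1 : y a ∈ Gm a := (hy a ha).2.1
        have h2 : y a ∈ Gm b := hab ▸ (hy b hb).2.1
        exact Set.disjoint_left.mp hd h1 h2
      have hcard := Finset.card_le_card_of_injOn y hmaps hinj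
      rw [hQcard, ← Set.ncard_eq_toFinset_card _ hSfin, hScard] at hcard
      omega
  · -- no point of U inside H : the whole basic set avoids the class
    refine ⟨{S : Sc X | S.1 ∈ ⋂₀ F}, scOpen hFIopen, ⟨T, hTv⟩, ?_, ?_⟩
    · intro S hS
      exact hvP' (hS : S.1 ∈ ⋂₀ F)
    · apply Set.subset_empty_iff.mp
      rintro S ⟨hSF, -, hScard⟩
      have hUHe : U ∩ H = ∅ := Set.not_nonempty_iff_eq_empty.mp hUH
      have h1 : S.1 ∩ H = ∅ := by
        apply Set.subset_empty_iff.mp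
        intro w hw
        have hmem : w ∈ U ∩ H := ⟨hsubU S.1 hSF hw.1, hw.2⟩
        rwa [hUHe] at hmem
      rw [h1, Set.ncard_empty] at hScard
      omega

/-- Every point of `S_c(X)` has an open neighborhood covered by countably many nowhere
dense sets. -/
lemma local_meagre [T35Space X] (hcr : ∀ x : X, ¬ IsOpen ({x} : Set X)) (z : Sc X) :
    ∃ (O : Set (Sc X)) (A : ℕ → Set (Sc X)), IsOpen O ∧ z ∈ O ∧
      (∀ k, IsNowhereDense (A k)) ∧ O ⊆ ⋃ k, A k := by
  classical
  obtain ⟨hinf, hcnt, hcl, x, hconv, hiso, hniso⟩ := z.2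
  obtain ⟨y, hy⟩ := (hinf.diff (Set.finite_singleton x)).nonempty
  have hxy : x ∉ ({y} : Set X) := by
    simp only [Set.mem_singleton_iff]
    exact fun h => hy.2 (h ▸ rfl)
  obtain ⟨f₀, hf₀c, hf₀x, hf₀y⟩ :=
    CompletelyRegularSpace.completely_regular x {y} isClosed_singleton hxy
  set f : X → ℝ := fun w => (f₀ w : ℝ) with hfdef
  have hfc : Continuous f := continuous_subtype_val.comp hf₀c
  have hfx : f x = 0 := by simp [hfdef, hf₀x]
  have hfy : f y = 1 := by
    have : f₀ y = 1 := hf₀y rfl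
    simp [hfdef, this]
  -- the indexed classes
  set Hq : ℚ → ℕ → Set X := fun q b =>
    if b = 0 then {w | (q : ℝ) < f w} else {w | f w < (q : ℝ)} with hHqdef
  have hHqopen : ∀ q b, IsOpen (Hq q b) := by
    intro q b
    by_cases hb : b = 0
    · simpa [hHqdef, hb] using isOpen_lt continuous_const hfc
    · simpa [hHqdef, hb] using isOpen_lt hfc continuous_const
  set Ncl : Set X → ℕ → Set (Sc X) :=
    fun H n => {S : Sc X | (S.1 ∩ H).Finite ∧ (S.1 ∩ H).ncard = n} with hNcldef
  set e : ℚ × ℕ × ℕ ≃ ℕ := Denumerable.eqv (ℚ × ℕ × ℕ) with hedef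
  set A : ℕ → Set (Sc X) := fun k =>
    if (e.symm k).2.1 = 0 then ∅ else Ncl (Hq (e.symm k).1 (e.symm k).2.2) (e.symm k).2.1
    with hAdef
  refine ⟨{S : Sc X | (S.1 ∩ {w | f w < 1/3}).Nonempty} ∩
    {S : Sc X | (S.1 ∩ {w | (2:ℝ)/3 < f w}).Nonempty}, A, ?_, ?_, ?_, ?_⟩
  · exact (scOpen (vopen_hit (isOpen_lt hfc continuous_const))).inter
      (scOpen (vopen_hit (isOpen_lt continuous_const hfc)))
  · constructor
    · exact ⟨x, hconv.1, by simp only [Set.mem_setOf_eq, hfx]; norm_num⟩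
    · exact ⟨y, hy.1, by simp only [Set.mem_setOf_eq, hfy]; norm_num⟩
  · intro k
    rw [hAdef]
    dsimp only
    split_ifs with h
    · exact isNowhereDense_empty
    · exact nwd_exact hcr (hHqopen _ _) (Nat.one_le_iff_ne_zero.mpr h)
  · rintro S ⟨⟨s₁, hs₁S, hs₁⟩, ⟨s₂, hs₂S, hs₂⟩⟩
    simp only [Set.mem_setOf_eq] at hs₁ hs₂
    obtain ⟨-, -, -, w, hwconv, -, -⟩ := S.2
    rcases lt_or_ge (f w) (f s₂) with h1 | h2
    · -- count points above q, for f w < q < f s₂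
      obtain ⟨q, hq1, hq2⟩ := exists_rat_btwn h1
      have hfin : (S.1 ∩ Hq q 0).Finite := by
        have hV : IsOpen {w' | f w' < (q : ℝ)} := isOpen_lt hfc continuous_const
        have := hwconv.2 _ hV hq1
        apply this.subset
        rintro a ⟨haS, haH⟩
        simp only [hHqdef, Set.mem_setOf_eq] at haH
        exact ⟨haS, by simp only [Set.mem_setOf_eq]; exact not_lt.mpr haH.le⟩
      have hnem : (S.1 ∩ Hq q 0).Nonempty :=
        ⟨s₂, hs₂S, by simp only [hHqdef, Set.mem_setOf_eq]; exact hq2⟩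
      have hpos : (S.1 ∩ Hq q 0).ncard ≠ 0 :=
        Nat.pos_iff_ne_zero.mp ((Set.ncard_pos hfin).mpr hnem)
      refine Set.mem_iUnion.mpr ⟨e ⟨q, (S.1 ∩ Hq q 0).ncard, 0⟩, ?_⟩
      rw [hAdef]
      simp only [Equiv.symm_apply_apply]
      rw [if_neg hpos]
      exact ⟨hfin, rfl⟩
    · -- count points below q, for f s₁ < q < f w
      have h3 : f s₁ < f w := by linarith
      obtain ⟨q, hq1, hq2⟩ := exists_rat_btwn h3
      have hfin : (S.1 ∩ Hq q 1).Finite := by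
        have hV : IsOpen {w' | (q : ℝ) < f w'} := isOpen_lt continuous_const hfc
        have := hwconv.2 _ hV hq2
        apply this.subset
        rintro a ⟨haS, haH⟩
        simp only [hHqdef, Set.mem_setOf_eq] at haH
        exact ⟨haS, by simp only [Set.mem_setOf_eq]; exact not_lt.mpr haH.le⟩
      have hnem : (S.1 ∩ Hq q 1).Nonempty :=
        ⟨s₁, hs₁S, by simp only [hHqdef, Set.mem_setOf_eq]; exact hq1⟩
      have hpos : (S.1 ∩ Hq q 1).ncard ≠ 0 :=
        Nat.pos_iff_ne_zero.mp ((Set.ncard_pos hfin).mpr hnem)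
      refine Set.mem_iUnion.mpr ⟨e ⟨q, (S.1 ∩ Hq q 1).ncard, 1⟩, ?_⟩
      rw [hAdef]
      simp only [Equiv.symm_apply_apply]
      rw [if_neg hpos]
      exact ⟨hfin, rfl⟩

end Main

/-- If `X` is a crowded Tychonoff space (with at least one nontrivial
convergent sequence), then `S_c(X)` is meager in itself. -/
theorem stmt4 {X : Type*} [TopologicalSpace X] [T35Space X]
    (hcrowded : ∀ x : X, ¬ IsOpen ({x} : Set X))
    (hne : ∃ S : Set X, IsNCS X S) :
    IsMeagre (Set.univ : Set (Sc X)) := by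
  classical
  rw [isMeagre_iff_countable_union_isNowhereDense]
  choose O A hOopen hzO hAnwd hcov using local_meagre (X := X) hcrowded
  -- Banach category argument: maximal pairwise disjoint family of open sets
  -- each contained in some O z
  set Fam : Set (Set (Set (Sc X))) :=
    {VV | (∀ V ∈ VV, IsOpen V ∧ V.Nonempty ∧ ∃ z, V ⊆ O z) ∧ VV.Pairwise Disjoint} with hFamdef
  have hub : ∀ c ⊆ Fam, IsChain (· ⊆ ·) c → ∃ ub ∈ Fam, ∀ s ∈ c, s ⊆ ub := by
    intro c hc hchain
    refine ⟨⋃₀ c, ⟨?_, ?_⟩, fun s hs => subset_sUnion_of_mem hs⟩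
    · rintro V ⟨d, hd, hVd⟩
      exact (hc hd).1 V hVd
    · rintro a ⟨d1, hd1, ha⟩ b ⟨d2, hd2, hb⟩ hne'
      rcases hchain.total hd1 hd2 with h | h
      · exact (hc hd2).2 (h ha) hb hne'
      · exact (hc hd1).2 ha (h hb) hne'
  obtain ⟨VV, hVV⟩ := zorn_subset Fam hub
  have hVVmem : VV ∈ Fam := hVV.1
  set G : Set (Sc X) := ⋃₀ VV with hGdef
  have hGopen : IsOpen G := isOpen_sUnion fun V hV => (hVVmem.1 V hV).1
  -- density of G
  have hGdense : ∀ p : Sc X, p ∈ closure G := by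
    intro p
    by_contra hp
    rw [mem_closure_iff] at hp
    push_neg at hp
    obtain ⟨o, ho, hpo, hoG⟩ := hp
    set R' : Set (Sc X) := o ∩ O p with hR'def
    have hR'G : R' ∩ G = ∅ := by
      apply Set.subset_empty_iff.mp
      rintro w ⟨⟨hwo, -⟩, hwG⟩
      exact (Set.subset_empty_iff.mpr hoG) ⟨hwo, hwG⟩ |>.elim
    have hR'ne : R'.Nonempty := ⟨p, hpo, hzO p⟩
    have hWW : Insert.insert R' VV ∈ Fam := by
      constructor
      · rintro V (rfl | hV)
        · exact ⟨ho.inter (hOopen p), hR'ne, p, Set.inter_subset_right⟩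
        · exact hVVmem.1 V hV
      · rw [Set.pairwise_insert]
        refine ⟨hVVmem.2, ?_⟩
        intro b hb _
        have hdisj : Disjoint R' b := by
          rw [Set.disjoint_left]
          intro w hwR' hwb
          have : w ∈ R' ∩ G := ⟨hwR', Set.subset_sUnion_of_mem hb hwb⟩
          rw [hR'G] at this
          exact this
        exact ⟨hdisj, hdisj.symm⟩
    have hsub : VV ⊆ Insert.insert R' VV := Set.subset_insert _ _
    have h1 : Insert.insert R' VV ⊆ VV := hVV.2 hWW hsub
    have hR'VV : R' ∈ VV := h1 (Set.mem_insert _ _)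
    have : R' ∩ G = R' := by
      apply Set.inter_eq_self_of_subset_left
      exact Set.subset_sUnion_of_mem hR'VV
    rw [hR'G] at this
    exact hR'ne.ne_empty this.symm
  -- choose for each member its witness
  obtain ⟨S₀, hS₀⟩ := hne
  have : Nonempty (Sc X) := ⟨⟨S₀, hS₀⟩⟩
  have hwit : ∀ V ∈ VV, ∃ z, V ⊆ O z := fun V hV => (hVVmem.1 V hV).2.2
  choose! ζ hζ using hwit
  set B : ℕ → Set (Sc X) := fun k => ⋃ (V ∈ VV), (V ∩ A (ζ V) k) with hBdef
  have hBnwd : ∀ k, IsNowhereDense (B k) := by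
    intro k
    apply nwd_of_forall
    intro P hP hPne
    by_cases hPG : (P ∩ G).Nonempty
    · obtain ⟨p, hpP, hpG⟩ := hPG
      obtain ⟨V, hVVV, hpV⟩ := hpG
      obtain ⟨R, hRo, hRne, hRsub, hRA⟩ := nwd_forall (hAnwd (ζ V) k) (P ∩ V)
        (hP.inter (hVVmem.1 V hVVV).1) ⟨p, hpP, hpV⟩
      refine ⟨R, hRo, hRne, hRsub.trans Set.inter_subset_left, ?_⟩
      apply Set.subset_empty_iff.mp
      rintro q ⟨hqR, hqB⟩
      simp only [hBdef, Set.mem_iUnion] at hqB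
      obtain ⟨W, hWVV, hqW, hqA⟩ := hqB
      by_cases hWV : W = V
      · subst hWV
        exact (Set.subset_empty_iff.mpr hRA) ⟨hqR, hqA⟩ |>.elim
      · have hdisj := hVVmem.2 hWVV hVVV hWV
        exact (Set.disjoint_left.mp hdisj hqW ((hRsub hqR).2)).elim
    · refine ⟨P, hP, hPne, subset_rfl, ?_⟩
      apply Set.subset_empty_iff.mp
      rintro q ⟨hqP, hqB⟩
      simp only [hBdef, Set.mem_iUnion] at hqB
      obtain ⟨W, hWVV, hqW, -⟩ := hqB
      exact hPG ⟨q, hqP, Set.subset_sUnion_of_mem hWVV hqW⟩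
  refine ⟨Insert.insert (closure G \ G) (Set.range B), ?_, ?_, ?_⟩
  · rintro t (rfl | ⟨k, rfl⟩)
    · exact nwd_clDiff hGopen
    · exact hBnwd k
  · exact (Set.countable_range B).insert _
  · intro p _
    by_cases hpG : p ∈ G
    · obtain ⟨V, hV, hpV⟩ := hpG
      have hpO : p ∈ O (ζ V) := hζ V hV hpV
      obtain ⟨k, hk⟩ := Set.mem_iUnion.mp (hcov (ζ V) hpO)
      refine ⟨B k, Set.mem_insert_of_mem _ ⟨k, rfl⟩, ?_⟩
      simp only [hBdef, Set.mem_iUnion]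
      exact ⟨V, hV, hpV, hk⟩
    · exact ⟨closure G \ G, Set.mem_insert _ _, hGdense p, hpG⟩
end

section
/- If the hyperspace S_c(X) of nontrivial convergent sequences of a space X is a Baire space, then the set of isolated points of X is dense in X. -/
open Set TopologicalSpace Filter

open Topology

section Aux

variable {X : Type*} [TopologicalSpace X]

lemma isOpen_vietoris_hit {U : Set X} (hU : IsOpen U) :
    IsOpen[vietoris X] {S : Set X | (S ∩ U).Nonempty} :=
  TopologicalSpace.GenerateOpen.basic _ (Or.inr ⟨U, hU, rfl⟩)

lemma isOpen_vietoris_sub {U : Set X} (hU : IsOpen U) :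
    IsOpen[vietoris X] {S : Set X | S ⊆ U} :=
  TopologicalSpace.GenerateOpen.basic _ (Or.inl ⟨U, hU, rfl⟩)

lemma isOpen_sc_preimage {A : Set (Set X)} (h : IsOpen[vietoris X] A) :
    IsOpen {S : Sc X | S.1 ∈ A} :=
  ⟨A, h, rfl⟩

lemma sc_open_destruct {𝒰 : Set (Sc X)} (h : IsOpen 𝒰) :
    ∃ A : Set (Set X), IsOpen[vietoris X] A ∧ 𝒰 = {S : Sc X | S.1 ∈ A} := by
  obtain ⟨A, hA, hpre⟩ := h
  exact ⟨A, hA, by rw [← hpre]; rfl⟩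

/-- Any vietoris-open set containing `S` contains, together with `S`, every set `T`
between `S` and some open `V ⊇ S`. -/
lemma vietoris_sandwich {𝒰 : Set (Set X)} (h : IsOpen[vietoris X] 𝒰) :
    ∀ S ∈ 𝒰, ∃ V : Set X, IsOpen V ∧ S ⊆ V ∧ ∀ T, S ⊆ T → T ⊆ V → T ∈ 𝒰 := by
  have h' : TopologicalSpace.GenerateOpen
      ({t | ∃ U : Set X, IsOpen U ∧ t = {S : Set X | S ⊆ U}} ∪
       {t | ∃ U : Set X, IsOpen U ∧ t = {S : Set X | (S ∩ U).Nonempty}}) 𝒰 := h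
  clear h
  induction h' with
  | @basic t ht =>
    intro S hS
    rcases ht with ⟨U, hU, rfl⟩ | ⟨U, hU, rfl⟩
    · exact ⟨U, hU, hS, fun T _ hTV => hTV⟩
    · exact ⟨univ, isOpen_univ, subset_univ _,
        fun T hST _ => hS.mono (inter_subset_inter hST subset_rfl)⟩
  | univ =>
    intro S _
    exact ⟨univ, isOpen_univ, subset_univ _, fun T _ _ => trivial⟩
  | inter s t hs ht ihs iht =>
    intro S hS
    obtain ⟨V₁, h1, h2, h3⟩ := ihs S hS.1
    obtain ⟨V₂, g1, g2, g3⟩ := iht S hS.2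
    exact ⟨V₁ ∩ V₂, h1.inter g1, subset_inter h2 g2, fun T hST hTV =>
      ⟨h3 T hST (hTV.trans inter_subset_left), g3 T hST (hTV.trans inter_subset_right)⟩⟩
  | sUnion s _ ih =>
    intro S hS
    obtain ⟨t, hts, hSt⟩ := hS
    obtain ⟨V, h1, h2, h3⟩ := ih t hts S hSt
    exact ⟨V, h1, h2, fun T a b => ⟨t, hts, h3 T a b⟩⟩

/-- Adding finitely many new points to an NCS yields an NCS. -/
lemma isNCS_union_finite [T1Space X] {S F : Set X} (hS : IsNCS X S) (hF : F.Finite)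
    (hd : ∀ z ∈ F, z ∉ S) : IsNCS X (S ∪ F) := by
  obtain ⟨hinf, hcnt, hcl, x, ⟨hxS, hconv⟩, hiso, hniso⟩ := hS
  refine ⟨hinf.mono subset_union_left, hcnt.union hF.countable,
    hcl.union hF.isClosed, x, ⟨Or.inl hxS, ?_⟩, ?_, ?_⟩
  · intro U hU hxU
    refine ((hconv U hU hxU).union hF).subset ?_
    rintro z ⟨hz | hz, hzU⟩
    · exact Or.inl ⟨hz, hzU⟩
    · exact Or.inr hz
  · intro y hy hyx
    rcases hy with hyS | hyF
    · obtain ⟨U, hUo, hUS⟩ := hiso y hyS hyx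
      have hyU : y ∈ U := by
        have : y ∈ U ∩ S := by rw [hUS]; rfl
        exact this.1
      refine ⟨U ∩ Fᶜ, hUo.inter hF.isClosed.isOpen_compl, ?_⟩
      ext z
      constructor
      · rintro ⟨⟨hzU, hzF⟩, hz | hz⟩
        · have : z ∈ U ∩ S := ⟨hzU, hz⟩
          rw [hUS] at this; exact this
        · exact absurd hz hzF
      · rintro rfl
        exact ⟨⟨hyU, fun h => hd _ h hyS⟩, Or.inl hyS⟩
    · refine ⟨(S ∪ (F \ {y}))ᶜ, (hcl.union ((hF.subset diff_subset).isClosed)).isOpen_compl, ?_⟩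
      ext z
      constructor
      · rintro ⟨hz, hz' | hz'⟩
        · exact absurd (Or.inl hz') hz
        · by_contra hzy
          exact hz (Or.inr ⟨hz', hzy⟩)
      · rintro rfl
        refine ⟨?_, Or.inr hyF⟩
        rintro (h | h)
        · exact hd _ hyF h
        · exact h.2 rfl
  · rintro ⟨U, hUo, hUS⟩
    refine hniso ⟨U, hUo, ?_⟩
    have hxU : x ∈ U := by
      have : x ∈ U ∩ (S ∪ F) := by rw [hUS]; rfl
      exact this.1
    apply Subset.antisymm
    · intro z hz
      have : z ∈ U ∩ (S ∪ F) := ⟨hz.1, Or.inl hz.2⟩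
      rw [hUS] at this; exact this
    · rintro z rfl
      exact ⟨hxU, hxS⟩

variable {W : Set X}

/-- A nonempty open subset of a crowded open region is infinite. -/
lemma crowded_infinite [T1Space X] (hW : ∀ y ∈ W, ¬ IsOpen ({y} : Set X))
    {O : Set X} (hO : IsOpen O) (hOW : O ⊆ W) (hne : O.Nonempty) : O.Infinite := by
  by_contra hfin
  rw [Set.not_infinite] at hfin
  obtain ⟨y, hy⟩ := hne
  have h1 : IsClosed (O \ {y}) := (hfin.subset diff_subset).isClosed
  have : IsOpen ({y} : Set X) := by
    have heq : ({y} : Set X) = O ∩ (O \ {y})ᶜ := by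
      ext z
      constructor
      · rintro rfl
        exact ⟨hy, fun h => h.2 rfl⟩
      · rintro ⟨hzO, hz⟩
        by_contra hzy
        exact hz ⟨hzO, hzy⟩
    rw [heq]
    exact hO.inter h1.isOpen_compl
  exact hW y (hOW hy) this

/-- A nonempty open subset of a crowded region is not covered by an NCS plus a finite set. -/
lemma crowded_diff [T1Space X] (hW : ∀ y ∈ W, ¬ IsOpen ({y} : Set X))
    {O S F : Set X} (hO : IsOpen O) (hOW : O ⊆ W) (hne : O.Nonempty) (hS : IsNCS X S)
    (hF : F.Finite) : (O \ (S ∪ F)).Nonempty := by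
  by_contra h
  rw [not_nonempty_iff_eq_empty, diff_eq_empty] at h
  obtain ⟨hinf, hcnt, hcl, x, hconv, hiso, hniso⟩ := hS
  have hOinf := crowded_infinite hW hO hOW hne
  obtain ⟨y, hyO, hyFx⟩ : ∃ y ∈ O, y ∉ F ∪ {x} := by
    obtain ⟨y, hy1, hy2⟩ := (hOinf.diff (hF.union (finite_singleton x))).nonempty
    exact ⟨y, hy1, hy2⟩
  have hyS : y ∈ S := (h hyO).resolve_right (fun hf => hyFx (Or.inl hf))
  have hyx : y ≠ x := fun he => hyFx (Or.inr (by simp [he]))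
  obtain ⟨U, hUo, hUS⟩ := hiso y hyS hyx
  have hyU : y ∈ U := by
    have : y ∈ U ∩ S := by rw [hUS]; rfl
    exact this.1
  have : IsOpen ({y} : Set X) := by
    have heq : ({y} : Set X) = O ∩ U ∩ Fᶜ := by
      ext z
      constructor
      · rintro rfl
        exact ⟨⟨hyO, hyU⟩, fun hf => hyFx (Or.inl hf)⟩
      · rintro ⟨⟨hzO, hzU⟩, hzF⟩
        have hzS : z ∈ S := (h hzO).resolve_right hzF
        have : z ∈ U ∩ S := ⟨hzU, hzS⟩
        rw [hUS] at this; exact this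
    rw [heq]
    exact (hO.inter hUo).inter hF.isClosed.isOpen_compl
  exact hW y (hOW hyO) this

/-- In a crowded open region one can find `n` pairwise disjoint open sets, each carrying a
point outside a given NCS. -/
lemma exists_hit_list [T1Space X] [T2Space X] (hW : ∀ y ∈ W, ¬ IsOpen ({y} : Set X))
    {O S : Set X} (hO : IsOpen O) (hOW : O ⊆ W) (hne : O.Nonempty) (hS : IsNCS X S) :
    ∀ n : ℕ, ∃ (L : List (X × Set X)) (R : Set X), L.length = n ∧ IsOpen R ∧ R.Nonempty ∧
      R ⊆ O ∧ (∀ p ∈ L, IsOpen p.2 ∧ p.2 ⊆ O ∧ p.1 ∈ p.2 ∧ p.1 ∉ S) ∧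
      (∀ p ∈ L, Disjoint R p.2) ∧ L.Pairwise (fun p q => Disjoint p.2 q.2) := by
  intro n
  induction n with
  | zero => exact ⟨[], O, rfl, hO, hne, subset_rfl, by simp, by simp, by simp⟩
  | succ n ih =>
    obtain ⟨L, R, hlen, hRo, hRne, hRO, hmem, hdisR, hpw⟩ := ih
    obtain ⟨a, haR, haS⟩ := crowded_diff hW hRo (hRO.trans hOW) hRne hS finite_empty
    obtain ⟨b, hbR, hbS⟩ := crowded_diff hW hRo (hRO.trans hOW) hRne hS (finite_singleton a)
    have hab : a ≠ b := by
      rintro rfl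
      exact hbS (Or.inr rfl)
    obtain ⟨A, B, hAo, hBo, haA, hbB, hAB⟩ := t2_separation hab
    refine ⟨(a, R ∩ A) :: L, R ∩ B, by simp [hlen], hRo.inter hBo, ⟨b, hbR, hbB⟩,
      inter_subset_left.trans hRO, ?_, ?_, ?_⟩
    · intro p hp
      rcases List.mem_cons.mp hp with rfl | hp
      · exact ⟨hRo.inter hAo, inter_subset_left.trans hRO, ⟨haR, haA⟩,
          fun hs => haS (Or.inl hs)⟩
      · exact hmem p hp
    · intro p hp
      rcases List.mem_cons.mp hp with rfl | hp
      · exact hAB.symm.mono inter_subset_right inter_subset_right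
      · exact (hdisR p hp).mono_left inter_subset_left
    · rw [List.pairwise_cons]
      exact ⟨fun p hp => (hdisR p hp).mono_left inter_subset_left, hpw⟩

/-- The key open sets: sequences hitting `n` pairwise disjoint open subsets of `B`, or
avoiding the closure of `B`. -/
def hitSets (B : Set X) (n : ℕ) : Set (Sc X) :=
  {S : Sc X | ∃ L : List (Set X), L.length = n ∧
      (∀ G ∈ L, IsOpen G ∧ G ⊆ B ∧ (S.1 ∩ G).Nonempty) ∧ L.Pairwise Disjoint} ∪
  {S : Sc X | S.1 ⊆ (closure B)ᶜ}

lemma isOpen_list_hits (L : List (Set X)) (hL : ∀ G ∈ L, IsOpen G) :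
    IsOpen {S : Sc X | ∀ G ∈ L, (S.1 ∩ G).Nonempty} := by
  induction L with
  | nil => simpa using (isOpen_univ : IsOpen (univ : Set (Sc X)))
  | cons G L ih =>
    have h1 : IsOpen {S : Sc X | (S.1 ∩ G).Nonempty} :=
      isOpen_sc_preimage (isOpen_vietoris_hit (hL G (by simp)))
    have h2 : IsOpen {S : Sc X | ∀ G' ∈ L, (S.1 ∩ G').Nonempty} :=
      ih (fun G' hG' => hL G' (List.mem_cons_of_mem _ hG'))
    have heq : {S : Sc X | ∀ G' ∈ G :: L, (S.1 ∩ G').Nonempty}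
        = {S : Sc X | (S.1 ∩ G).Nonempty} ∩ {S : Sc X | ∀ G' ∈ L, (S.1 ∩ G').Nonempty} := by
      ext S
      simp [List.forall_mem_cons]
    rw [heq]
    exact h1.inter h2

lemma isOpen_hitSets (B : Set X) (n : ℕ) : IsOpen (hitSets B n) := by
  apply IsOpen.union
  · have heq : {S : Sc X | ∃ L : List (Set X), L.length = n ∧
        (∀ G ∈ L, IsOpen G ∧ G ⊆ B ∧ (S.1 ∩ G).Nonempty) ∧ L.Pairwise Disjoint}
        = ⋃ (L : List (Set X)) (_ : L.length = n ∧ (∀ G ∈ L, IsOpen G ∧ G ⊆ B) ∧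
            L.Pairwise Disjoint), {S : Sc X | ∀ G ∈ L, (S.1 ∩ G).Nonempty} := by
      ext S
      simp only [mem_iUnion, mem_setOf_eq]
      constructor
      · rintro ⟨L, h1, h2, h3⟩
        exact ⟨L, ⟨h1, fun G hG => ⟨(h2 G hG).1, (h2 G hG).2.1⟩, h3⟩,
          fun G hG => (h2 G hG).2.2⟩
      · rintro ⟨L, ⟨h1, h2, h3⟩, h4⟩
        exact ⟨L, h1, fun G hG => ⟨(h2 G hG).1, (h2 G hG).2, h4 G hG⟩, h3⟩
    rw [heq]
    exact isOpen_iUnion fun L => isOpen_iUnion fun hL =>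
      isOpen_list_hits L (fun G hG => (hL.2.1 G hG).1)
  · exact isOpen_sc_preimage (isOpen_vietoris_sub isClosed_closure.isOpen_compl)

lemma dense_hitSets [T1Space X] [T2Space X] (hW : ∀ y ∈ W, ¬ IsOpen ({y} : Set X))
    {B : Set X} (hBo : IsOpen B) (hBW : B ⊆ W) (n : ℕ) : Dense (hitSets B n) := by
  rw [dense_iff_inter_open]
  rintro 𝒰 h𝒰 ⟨S, hS⟩
  by_cases hcl : (S.1 ∩ closure B).Nonempty
  · obtain ⟨A, hA, rfl⟩ := sc_open_destruct h𝒰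
    obtain ⟨V, hVo, hSV, hmax⟩ := vietoris_sandwich hA S.1 hS
    obtain ⟨y, hyS, hyB⟩ := hcl
    have hVB : (V ∩ B).Nonempty := mem_closure_iff.mp hyB V hVo (hSV hyS)
    obtain ⟨L, R, hlen, -, -, -, hmem, -, hpw⟩ :=
      exists_hit_list hW (hVo.inter hBo) (inter_subset_right.trans hBW) hVB S.2 n
    set F : Set X := {x | x ∈ L.map Prod.fst} with hF
    have hFfin : F.Finite := (L.map Prod.fst).finite_toSet
    have hFS : ∀ z ∈ F, z ∉ S.1 := by
      rintro z hz
      obtain ⟨p, hp, rfl⟩ := List.mem_map.mp hz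
      exact (hmem p hp).2.2.2
    have hNCS : IsNCS X (S.1 ∪ F) := isNCS_union_finite S.2 hFfin hFS
    refine ⟨⟨S.1 ∪ F, hNCS⟩, ?_, ?_⟩
    · apply hmax _ subset_union_left
      rintro z (hz | hz)
      · exact hSV hz
      · obtain ⟨p, hp, rfl⟩ := List.mem_map.mp hz
        exact ((hmem p hp).2.1 (hmem p hp).2.2.1).1
    · left
      refine ⟨L.map Prod.snd, by simp [hlen], ?_, ?_⟩
      · rintro G hG
        obtain ⟨p, hp, rfl⟩ := List.mem_map.mp hG
        obtain ⟨ho, hsub, hmemp, -⟩ := hmem p hp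
        exact ⟨ho, hsub.trans inter_subset_right,
          ⟨p.1, Or.inr (List.mem_map.mpr ⟨p, hp, rfl⟩), hmemp⟩⟩
      · rw [List.pairwise_map]
        exact hpw
  · refine ⟨S, hS, Or.inr ?_⟩
    intro z hz hzc
    rw [not_nonempty_iff_eq_empty] at hcl
    have hmem : z ∈ (S.1 ∩ closure B) := ⟨hz, hzc⟩
    rw [hcl] at hmem
    exact hmem

lemma finset_of_list (A : Set X) : ∀ (L : List (Set X)), (∀ G ∈ L, (A ∩ G).Nonempty) →
    L.Pairwise Disjoint → ∃ t : Finset X, (∀ x ∈ t, x ∈ A ∧ ∃ G ∈ L, x ∈ G) ∧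
      L.length ≤ t.card := by
  classical
  intro L
  induction L with
  | nil => exact fun _ _ => ⟨∅, by simp, by simp⟩
  | cons G L ihL =>
    intro hhit hpw
    obtain ⟨t, ht, hcard⟩ := ihL (fun G' h => hhit G' (List.mem_cons_of_mem _ h)) hpw.of_cons
    obtain ⟨z, hzA, hzG⟩ := hhit G (List.mem_cons_self)
    have hzt : z ∉ t := by
      intro hzt
      obtain ⟨-, G', hG', hzG'⟩ := ht z hzt
      exact Set.disjoint_left.mp (List.rel_of_pairwise_cons hpw hG') hzG hzG'
    refine ⟨insert z t, ?_, ?_⟩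
    · intro x hx
      rcases Finset.mem_insert.mp hx with rfl | hx
      · exact ⟨hzA, G, List.mem_cons_self, hzG⟩
      · obtain ⟨h1, G', hG', h2⟩ := ht x hx
        exact ⟨h1, G', List.mem_cons_of_mem _ hG', h2⟩
    · rw [Finset.card_insert_of_notMem hzt]
      simpa using Nat.succ_le_succ hcard

lemma infinite_of_hitSets {B : Set X} {S : Sc X} (h : ∀ n, S ∈ hitSets B n)
    (hne : (S.1 ∩ B).Nonempty) : (S.1 ∩ B).Infinite := by
  by_contra hfin
  rw [Set.not_infinite] at hfin
  rcases h (hfin.toFinset.card + 1) with hL | hbad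
  · obtain ⟨L, hlen, hhit, hpw⟩ := hL
    obtain ⟨t, ht, hcard⟩ := finset_of_list S.1 L (fun G hG => (hhit G hG).2.2) hpw
    have hsub : t ⊆ hfin.toFinset := by
      intro x hx
      obtain ⟨hxS, G, hG, hxG⟩ := ht x hx
      exact hfin.mem_toFinset.mpr ⟨hxS, (hhit G hG).2.1 hxG⟩
    have := (hlen ▸ hcard).trans (Finset.card_le_card hsub)
    omega
  · obtain ⟨y, hyS, hyB⟩ := hne
    exact hbad hyS (subset_closure hyB)

end Aux

/-- If `S_c(X)` is a Baire space, then the set of isolated points of `X`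
is dense in `X`. -/
theorem stmt5 {X : Type*} [TopologicalSpace X] [T35Space X]
    (hne : ∃ S : Set X, IsNCS X S) (hB : BaireSpace (Sc X)) :
    Dense {x : X | IsOpen ({x} : Set X)} := by
  haveI := hB
  by_contra hnd
  rw [dense_iff_inter_open] at hnd
  push_neg at hnd
  obtain ⟨W, hWo, hWne, hWiso⟩ := hnd
  have hW : ∀ y ∈ W, ¬ IsOpen ({y} : Set X) := by
    intro y hy hiso
    have hmem : y ∈ W ∩ {x | IsOpen ({x} : Set X)} := ⟨hy, hiso⟩
    rw [hWiso] at hmem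
    exact hmem
  obtain ⟨S₀, hS₀⟩ := hne
  obtain ⟨w₁, hw₁W, hw₁S⟩ := crowded_diff hW hWo subset_rfl hWne hS₀ finite_empty
  obtain ⟨w₂, hw₂W, hw₂S⟩ := crowded_diff hW hWo subset_rfl hWne hS₀ (finite_singleton w₁)
  have hw₁S' : w₁ ∉ S₀ := fun h => hw₁S (Or.inl h)
  have hw₂S' : w₂ ∉ S₀ := fun h => hw₂S (Or.inl h)
  have hw12 : w₁ ≠ w₂ := fun h => hw₂S (Or.inr (by simp [h]))
  obtain ⟨O₁, O₂, hO₁, hO₂, h1, h2, hdisj⟩ := t2_separation hw12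
  obtain ⟨C₁, hC₁n, hC₁c, hC₁sub⟩ :=
    exists_mem_nhds_isClosed_subset ((hO₁.inter hWo).mem_nhds ⟨h1, hw₁W⟩)
  obtain ⟨C₂, hC₂n, hC₂c, hC₂sub⟩ :=
    exists_mem_nhds_isClosed_subset ((hO₂.inter hWo).mem_nhds ⟨h2, hw₂W⟩)
  set B₁ := interior C₁ with hB₁
  set B₂ := interior C₂ with hB₂
  have hw₁B : w₁ ∈ B₁ := mem_interior_iff_mem_nhds.mpr hC₁n
  have hw₂B : w₂ ∈ B₂ := mem_interior_iff_mem_nhds.mpr hC₂n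
  have hB₁cl : closure B₁ ⊆ O₁ ∩ W :=
    (closure_minimal interior_subset hC₁c).trans hC₁sub
  have hB₂cl : closure B₂ ⊆ O₂ ∩ W :=
    (closure_minimal interior_subset hC₂c).trans hC₂sub
  have hB₁W : B₁ ⊆ W := subset_closure.trans (hB₁cl.trans inter_subset_right)
  have hB₂W : B₂ ⊆ W := subset_closure.trans (hB₂cl.trans inter_subset_right)
  -- the open dense sets
  have hHo : ∀ n : ℕ, IsOpen (hitSets B₁ n ∩ hitSets B₂ n) :=
    fun n => (isOpen_hitSets B₁ n).inter (isOpen_hitSets B₂ n)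
  have hHd : ∀ n : ℕ, Dense (hitSets B₁ n ∩ hitSets B₂ n) := fun n =>
    (dense_hitSets hW isOpen_interior hB₁W n).inter_of_isOpen_left
      (dense_hitSets hW isOpen_interior hB₂W n) (isOpen_hitSets B₁ n)
  have hdense := dense_iInter_of_isOpen hHo hHd
  -- the nonempty open set of sequences meeting both B₁ and B₂
  have hNCS : IsNCS X (S₀ ∪ {w₁, w₂}) := by
    refine isNCS_union_finite hS₀ (by simp) ?_
    rintro z (rfl | rfl)
    · exact hw₁S'
    · exact hw₂S'
  set 𝒪 : Set (Sc X) := {S : Sc X | (S.1 ∩ B₁).Nonempty} ∩ {S : Sc X | (S.1 ∩ B₂).Nonempty}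
    with h𝒪
  have h𝒪o : IsOpen 𝒪 :=
    (isOpen_sc_preimage (isOpen_vietoris_hit isOpen_interior)).inter
      (isOpen_sc_preimage (isOpen_vietoris_hit isOpen_interior))
  have h𝒪ne : 𝒪.Nonempty :=
    ⟨⟨S₀ ∪ {w₁, w₂}, hNCS⟩, ⟨w₁, Or.inr (Or.inl rfl), hw₁B⟩, ⟨w₂, Or.inr (Or.inr rfl), hw₂B⟩⟩
  obtain ⟨S, hS𝒪, hSH⟩ := dense_iff_inter_open.mp hdense 𝒪 h𝒪o h𝒪ne
  have hinf1 : (S.1 ∩ B₁).Infinite :=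
    infinite_of_hitSets (fun n => (mem_iInter.mp hSH n).1) hS𝒪.1
  have hinf2 : (S.1 ∩ B₂).Infinite :=
    infinite_of_hitSets (fun n => (mem_iInter.mp hSH n).2) hS𝒪.2
  obtain ⟨-, -, -, x, ⟨hxS, hconv⟩, -, -⟩ := S.2
  have hx12 : x ∉ closure B₁ ∨ x ∉ closure B₂ := by
    by_contra hx
    push_neg at hx
    exact hdisj.le_bot ⟨(hB₁cl hx.1).1, (hB₂cl hx.2).1⟩
  rcases hx12 with hx | hx
  · have hfin := hconv (closure B₁)ᶜ isClosed_closure.isOpen_compl hx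
    refine hinf1 (hfin.subset ?_)
    rintro z ⟨hzS, hzB⟩
    exact ⟨hzS, fun hc => hc (subset_closure hzB)⟩
  · have hfin := hconv (closure B₂)ᶜ isClosed_closure.isOpen_compl hx
    refine hinf2 (hfin.subset ?_)
    rintro z ⟨hzS, hzB⟩
    exact ⟨hzS, fun hc => hc (subset_closure hzB)⟩
end

section
/- Let F be a free filter on ℕ and ξ(F) the space ℕ ∪ {F} in which points of ℕ are isolated and neighborhoods of the point F are the sets A ∪ {F} with A ∈ F. If the hyperspace S_c(ξ(F)) is not meager in itself, then F is an α₂-filter: for every countable family {S_n : n ∈ ℕ} of nontrivial sequences in ξ(F) converging to the point F, there exists a nontrivial sequence T converging to F with T ∩ S_n infinite for all n. -/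
open Set TopologicalSpace Filter

/-- The topology of the space `ξ(F) = ℕ ∪ {F}` (coded as `Option ℕ`, with `none` playing
the role of the point `F`): points of `ℕ` are isolated, and neighborhoods of `none`
are the sets `A ∪ {none}` with `A ∈ F`. -/
def xiTop (F : Filter ℕ) : TopologicalSpace (Option ℕ) where
  IsOpen U := none ∈ U → {n : ℕ | some n ∈ U} ∈ F
  isOpen_univ := fun _ => Filter.univ_mem
  isOpen_inter := fun U V hU hV h => Filter.inter_mem (hU h.1) (hV h.2)
  isOpen_sUnion := fun s hs h => by
    obtain ⟨t, ht, hnt⟩ := h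
    exact Filter.mem_of_superset (hs t ht hnt) (fun n hn => ⟨t, ht, hn⟩)

open Topology

/-! For each `n` and each finite `K`, the sequences meeting `S n \ K` form an open subset
of `S_c(ξ(F))`, and a dense one: a Vietoris neighbourhood of `T₀` contains `insert y T₀` for
all `y` close enough to the limit point, and such `y` exist in `S n \ K` because `S n`
converges to it. Since `S_c(ξ(F))` is not meagre, these countably many dense open sets have
a common point `T`, and `T` then meets every `S n` in an infinite set. -/

theorem nonempty_iInter_of_not_isMeagre_univ {Y ι : Type*} [TopologicalSpace Y] [Countable ι]
    {D : ι → Set Y} (hopen : ∀ i, IsOpen (D i)) (hdense : ∀ i, Dense (D i))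
    (h : ¬ IsMeagre (univ : Set Y)) : (⋂ i, D i).Nonempty := by
  rw [nonempty_iff_ne_empty]
  intro hempty
  have : ⋂ i, D i ∈ residual Y :=
    countable_iInter_mem.2 fun i => residual_of_dense_open (hopen i) (hdense i)
  rw [hempty] at this
  exact h (by rwa [IsMeagre, compl_univ])

theorem eventually_insert_mem_of_isOpen_vietoris {X : Type*} [TopologicalSpace X]
    {V : Set (Set X)} (hV : IsOpen[vietoris X] V) {s : Set X} (hs : s ∈ V) {x : X}
    (hx : x ∈ s) : ∀ᶠ y in 𝓝 x, insert y s ∈ V := by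
  induction hV generalizing s with
  | basic t ht =>
    rcases ht with ⟨U, hU, rfl⟩ | ⟨U, hU, rfl⟩
    · filter_upwards [hU.mem_nhds (hs hx)] with y hy using insert_subset hy hs
    · exact Eventually.of_forall fun y => hs.mono (inter_subset_inter_left _ (subset_insert y s))
  | univ => exact Eventually.of_forall fun _ => trivial
  | inter V₁ V₂ _ _ ih₁ ih₂ => exact (ih₁ hs.1 hx).and (ih₂ hs.2 hx)
  | sUnion K _ ih =>
    obtain ⟨t, htK, hst⟩ := hs
    exact (ih t htK hst hx).mono fun y hy => ⟨t, htK, hy⟩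

section

variable {X : Type*} [TopologicalSpace X] {x : X}

theorem ConvTo.insert {s : Set X} (h : ConvTo s x) (y : X) : ConvTo (insert y s) x :=
  ⟨mem_insert_of_mem _ h.1, fun U hU hxU =>
    ((h.2 U hU hxU).insert y).subset insert_sdiff_subset⟩

theorem ConvTo.mem_closure_diff {s K : Set X} (h : ConvTo s x) (hs : s.Infinite)
    (hK : K.Finite) : x ∈ closure (s \ K) := by
  refine mem_closure_iff.2 fun U hU hxU => ?_
  have hfin : ((s \ K) \ U).Finite := (h.2 U hU hxU).subset (sdiff_subset_sdiff_left sdiff_subset)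
  rw [inter_comm, ← sdiff_sdiff_right_self]
  exact ((hs.sdiff hK).sdiff hfin).nonempty

theorem isOpen_of_notMem (hiso : ∀ y, y ≠ x → IsOpen ({y} : Set X)) {U : Set X}
    (hU : x ∉ U) : IsOpen U := by
  rw [← biUnion_of_singleton U]
  exact isOpen_biUnion fun y hy => hiso y (ne_of_mem_of_not_mem hy hU)

theorem isNCS_iff (hiso : ∀ y, y ≠ x → IsOpen ({y} : Set X)) {s : Set X} :
    IsNCS X s ↔ s.Infinite ∧ s.Countable ∧ ConvTo s x := by
  constructor
  · rintro ⟨hinf, hcount, -, z, hz, -, hnot⟩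
    obtain rfl : z = x := by
      by_contra hzx
      exact hnot ⟨{z}, hiso z hzx, singleton_inter_of_mem hz.1⟩
    exact ⟨hinf, hcount, hz⟩
  · rintro ⟨hinf, hcount, hconv⟩
    refine ⟨hinf, hcount, ⟨isOpen_of_notMem hiso fun hx => hx hconv.1⟩, x, hconv,
      fun y hy hyx => ⟨{y}, hiso y hyx, singleton_inter_of_mem hy⟩, ?_⟩
    rintro ⟨U, hU, hUs⟩
    have hxU : x ∈ U := (hUs.superset (mem_singleton x)).1
    refine hinf (((hconv.2 U hU hxU).insert x).subset ?_)
    intro y hy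
    by_cases hyU : y ∈ U
    · exact Or.inl (hUs.subset ⟨hyU, hy⟩ : y ∈ ({x} : Set X))
    · exact Or.inr ⟨hy, hyU⟩

theorem isOpen_setOf_inter_nonempty {A : Set X} (hA : IsOpen A) :
    IsOpen {T : Sc X | (T.1 ∩ A).Nonempty} :=
  isOpen_induced (t := vietoris X) (s := {s : Set X | (s ∩ A).Nonempty})
    (isOpen_generateFrom_of_mem (Or.inr ⟨A, hA, rfl⟩))

theorem dense_setOf_inter_nonempty (hiso : ∀ y, y ≠ x → IsOpen ({y} : Set X)) {A : Set X}
    (hA : x ∈ closure A) : Dense {T : Sc X | (T.1 ∩ A).Nonempty} := by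
  rw [dense_iff_inter_open]
  rintro O hO ⟨T₀, hT₀⟩
  obtain ⟨V, hV, rfl⟩ := (isOpen_induced_iff (t := vietoris X)).1 hO
  obtain ⟨hinf, hcount, hconv⟩ := (isNCS_iff hiso).1 T₀.2
  obtain ⟨y, hyV, hyA⟩ :=
    mem_closure_iff_nhds.1 hA _ (eventually_insert_mem_of_isOpen_vietoris hV hT₀ hconv.1)
  have hNCS : IsNCS X (insert y T₀.1) :=
    (isNCS_iff hiso).2 ⟨hinf.mono (subset_insert _ _), hcount.insert y, hconv.insert y⟩
  exact ⟨⟨_, hNCS⟩, hyV, y, mem_insert y _, hyA⟩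

theorem exists_convTo_forall_inter_infinite [Countable X]
    (hiso : ∀ y, y ≠ x → IsOpen ({y} : Set X)) (hX : ¬ IsMeagre (univ : Set (Sc X)))
    {S : ℕ → Set X} (hinf : ∀ n, (S n).Infinite) (hconv : ∀ n, ConvTo (S n) x) :
    ∃ T : Sc X, ConvTo T.1 x ∧ ∀ n, (T.1 ∩ S n).Infinite := by
  let D : ℕ × Finset X → Set (Sc X) := fun p =>
    {T | (T.1 ∩ (S p.1 \ insert x ↑p.2)).Nonempty}
  have hopen (p : ℕ × Finset X) : IsOpen (D p) :=
    isOpen_setOf_inter_nonempty (isOpen_of_notMem hiso fun hx => hx.2 (mem_insert x _))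
  have hdense (p : ℕ × Finset X) : Dense (D p) :=
    dense_setOf_inter_nonempty hiso
      ((hconv p.1).mem_closure_diff (hinf p.1) (p.2.finite_toSet.insert x))
  obtain ⟨T, hT⟩ := nonempty_iInter_of_not_isMeagre_univ hopen hdense hX
  refine ⟨T, ((isNCS_iff hiso).1 T.2).2.2, fun n hfin => ?_⟩
  obtain ⟨y, hyT, hyS, hyK⟩ := mem_iInter.1 hT (n, hfin.toFinset)
  exact hyK (mem_insert_of_mem x (hfin.mem_toFinset.2 ⟨hyT, hyS⟩))

end

theorem xiTop_isOpen_singleton {F : Filter ℕ} (y : Option ℕ) (hy : y ≠ none) :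
    IsOpen[xiTop F] {y} :=
  fun h => absurd h.symm hy

theorem stmt7_general (F : Filter ℕ) :
    letI : TopologicalSpace (Option ℕ) := xiTop F
    FrechetUrysohnSpace (Option ℕ) →
    ¬ IsMeagre (Set.univ : Set (Sc (Option ℕ))) →
    ∀ S : ℕ → Sc (Option ℕ), (∀ n, ConvTo (S n).1 none) →
      ∃ T : Sc (Option ℕ), ConvTo T.1 none ∧ ∀ n, (T.1 ∩ (S n).1).Infinite := by
  let : TopologicalSpace (Option ℕ) := xiTop F
  intro _ hX S hconv
  exact exists_convTo_forall_inter_infinite xiTop_isOpen_singleton hX (fun n => (S n).2.1) hconv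

/-- If `F` is a free (Fréchet–Urysohn) filter on `ℕ` and `S_c(ξ(F))` is not
meager in itself, then `F` is an `α₂`-filter: for every countable family of nontrivial
convergent sequences converging to the point `F`, there is a nontrivial convergent
sequence `T` converging to `F` meeting each of them in an infinite set. -/
theorem stmt7 (F : Filter ℕ) (hfree : F ≤ Filter.cofinite) :
    letI : TopologicalSpace (Option ℕ) := xiTop F
    FrechetUrysohnSpace (Option ℕ) →
    ¬ IsMeagre (Set.univ : Set (Sc (Option ℕ))) →
    ∀ S : ℕ → Sc (Option ℕ), (∀ n, ConvTo (S n).1 none) →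
      ∃ T : Sc (Option ℕ), ConvTo T.1 none ∧ ∀ n, (T.1 ∩ (S n).1).Infinite :=
  stmt7_general F
end

section
/- Let F be a free filter on ℕ with a countable base {B_n : n ∈ ℕ}. Then S_c(ξ(F)) is a G_δ subset of the hyperspace CL(ξ(F)) of nonempty closed subsets with the Vietoris topology. Specifically, S_c(ξ(F)) = (⋂_n O_{B_n}) \ F(ξ(F)), where O_B = {S ∈ CL(ξ(F)) : S \ B is finite} is open and the set F(ξ(F)) of nonempty finite subsets is F_σ in CL(ξ(F)). -/
open Set TopologicalSpace Filter

/-- The hyperspace of all nonempty closed subsets of `X`, with the Vietoris topology. -/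
def CL (X : Type*) [TopologicalSpace X] : Type _ :=
  {S : Set X // S.Nonempty ∧ IsClosed S}

instance (X : Type*) [TopologicalSpace X] : TopologicalSpace (CL X) :=
  TopologicalSpace.induced (fun S : CL X => S.1) (vietoris X)

lemma vietoris_isOpen_subsets {X : Type*} [TopologicalSpace X] {U : Set X} (hU : IsOpen U) :
    (vietoris X).IsOpen {S : Set X | S ⊆ U} :=
  TopologicalSpace.GenerateOpen.basic _ (Or.inl ⟨U, hU, rfl⟩)

lemma vietoris_isOpen_hits {X : Type*} [TopologicalSpace X] {U : Set X} (hU : IsOpen U) :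
    (vietoris X).IsOpen {S : Set X | (S ∩ U).Nonempty} :=
  TopologicalSpace.GenerateOpen.basic _ (Or.inr ⟨U, hU, rfl⟩)

lemma CL_isOpen {X : Type*} [TopologicalSpace X] {A : Set (Set X)}
    (hA : (vietoris X).IsOpen A) : IsOpen {S : CL X | S.1 ∈ A} :=
  ⟨A, hA, rfl⟩

/-- For a free filter `F` on `ℕ` with countable base `{B n : n ∈ ℕ}`, each
`O_{B n} = {S ∈ CL(ξ(F)) : S \ B n finite}` is open, the nonempty finite sets form an
`F_σ` set, `S_c(ξ(F)) = (⋂ n, O_{B n}) \ F(ξ(F))`, and hence `S_c(ξ(F))` is a `G_δ`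
subset of `CL(ξ(F))`. -/
theorem stmt10 (F : Filter ℕ) (hfree : F ≤ Filter.cofinite) (B : ℕ → Set ℕ)
    (hB : F.HasBasis (fun _ : ℕ => True) B) :
    letI : TopologicalSpace (Option ℕ) := xiTop F
    (∀ n : ℕ, IsOpen {S : CL (Option ℕ) | (S.1 \ (some '' B n)).Finite}) ∧
    (∃ C : ℕ → Set (CL (Option ℕ)), (∀ n, IsClosed (C n)) ∧
      {S : CL (Option ℕ) | S.1.Finite} = ⋃ n, C n) ∧
    {S : CL (Option ℕ) | IsNCS (Option ℕ) S.1} =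
      (⋂ n : ℕ, {S : CL (Option ℕ) | (S.1 \ (some '' B n)).Finite}) \
        {S : CL (Option ℕ) | S.1.Finite} ∧
    IsGδ {S : CL (Option ℕ) | IsNCS (Option ℕ) S.1} := by
  letI : TopologicalSpace (Option ℕ) := xiTop F
  have hBmem : ∀ n, B n ∈ F := fun n => hB.mem_of_mem trivial
  have hexB : ∀ A ∈ F, ∃ n, B n ⊆ A := by
    intro A hA
    obtain ⟨n, -, hn⟩ := hB.mem_iff.mp hA
    exact ⟨n, hn⟩
  have hopen_iff : ∀ U : Set (Option ℕ), IsOpen U ↔ (none ∈ U → {n : ℕ | some n ∈ U} ∈ F) :=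
    fun U => Iff.rfl
  have hopen_no_none : ∀ U : Set (Option ℕ), none ∉ U → IsOpen U :=
    fun U h hn => absurd hn h
  -- Part 1: each O_{B n} is open
  have part1 : ∀ n : ℕ, IsOpen {S : CL (Option ℕ) | (S.1 \ (some '' B n)).Finite} := by
    intro n
    have heq : {S : CL (Option ℕ) | (S.1 \ (some '' B n)).Finite} =
        {S : CL (Option ℕ) | S.1 ∈
          ⋃ K : Finset (Option ℕ), {T : Set (Option ℕ) | T ⊆ some '' B n ∪ ↑K}} := by
      ext S
      simp only [mem_setOf_eq, mem_iUnion]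
      constructor
      · intro h
        refine ⟨h.toFinset, fun x hx => ?_⟩
        by_cases hxB : x ∈ some '' B n
        · exact Or.inl hxB
        · exact Or.inr (by simpa using h.mem_toFinset.mpr ⟨hx, hxB⟩)
      · rintro ⟨K, hK⟩
        exact K.finite_toSet.subset (fun x hx => (hK hx.1).resolve_left hx.2)
    rw [heq]
    refine CL_isOpen ?_
    rw [← Set.sUnion_range]
    refine (vietoris (Option ℕ)).isOpen_sUnion _ ?_
    rintro t ⟨K, rfl⟩
    refine vietoris_isOpen_subsets ?_
    intro _
    exact F.mem_of_superset (hBmem n) (fun m hm => Or.inl ⟨m, hm, rfl⟩)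
  -- Part 2: finite sets are F_σ
  have part2 : ∃ C : ℕ → Set (CL (Option ℕ)), (∀ n, IsClosed (C n)) ∧
      {S : CL (Option ℕ) | S.1.Finite} = ⋃ n, C n := by
    refine ⟨fun n => {S : CL (Option ℕ) | S.1 ⊆ some '' Set.Iic n ∪ {none}}, ?_, ?_⟩
    · intro n
      rw [← isOpen_compl_iff]
      have hc : {S : CL (Option ℕ) | S.1 ⊆ some '' Set.Iic n ∪ {none}}ᶜ =
          {S : CL (Option ℕ) | S.1 ∈
            {T : Set (Option ℕ) | (T ∩ (some '' Set.Iic n ∪ {none})ᶜ).Nonempty}} := by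
        ext S
        simp only [mem_compl_iff, mem_setOf_eq, Set.not_subset]
        constructor
        · rintro ⟨a, ha, hna⟩; exact ⟨a, ha, hna⟩
        · rintro ⟨a, ha, hna⟩; exact ⟨a, ha, hna⟩
      rw [hc]
      refine CL_isOpen (vietoris_isOpen_hits (hopen_no_none _ ?_))
      simp [mem_compl_iff]
    · ext S
      simp only [mem_setOf_eq, mem_iUnion]
      constructor
      · intro h
        have hfin : {k : ℕ | some k ∈ S.1}.Finite := by
          have : {k : ℕ | some k ∈ S.1} = some ⁻¹' S.1 := rfl
          rw [this]
          exact h.preimage (Option.some_injective ℕ).injOn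
        obtain ⟨n, hn⟩ := hfin.bddAbove
        refine ⟨n, fun x hx => ?_⟩
        cases x with
        | none => exact Or.inr rfl
        | some k => exact Or.inl ⟨k, hn hx, rfl⟩
      · rintro ⟨n, hn⟩
        exact (((Set.finite_Iic n).image some).union (Set.finite_singleton none)).subset hn
  -- Part 3: the equality
  have part3 : {S : CL (Option ℕ) | IsNCS (Option ℕ) S.1} =
      (⋂ n : ℕ, {S : CL (Option ℕ) | (S.1 \ (some '' B n)).Finite}) \
        {S : CL (Option ℕ) | S.1.Finite} := by
    ext S
    simp only [mem_diff, mem_iInter, mem_setOf_eq]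
    constructor
    · rintro ⟨hinf, hcnt, hcl, x, hconv, hiso, hniso⟩
      have hx : x = none := by
        by_contra hne
        obtain ⟨k, rfl⟩ := Option.ne_none_iff_exists'.mp hne
        refine hniso ⟨{some k}, hopen_no_none _ (by simp), ?_⟩
        ext a
        simp only [mem_inter_iff, mem_singleton_iff]
        exact ⟨fun h => h.1, fun h => ⟨h, h ▸ hconv.1⟩⟩
      subst hx
      refine ⟨fun n => ?_, hinf⟩
      have hUopen : IsOpen (insert none (some '' B n)) := by
        intro _
        exact F.mem_of_superset (hBmem n) (fun m hm => Or.inr ⟨m, hm, rfl⟩)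
      have hfin := hconv.2 _ hUopen (mem_insert _ _)
      refine (hfin.insert none).subset ?_
      rintro a ⟨ha, hna⟩
      rcases eq_or_ne a none with rfl | hne
      · exact mem_insert _ _
      · exact Or.inr ⟨ha, fun h => h.elim (fun h' => hne h') hna⟩
    · rintro ⟨hO, hinf⟩
      have hSinf : S.1.Infinite := hinf
      have hnone : none ∈ S.1 := by
        by_contra hn
        have hcop : IsOpen S.1ᶜ := S.2.2.isOpen_compl
        obtain ⟨n, hsub⟩ := hexB _ (hcop hn)
        refine hSinf ((hO n).subset fun a ha => ⟨ha, ?_⟩)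
        rintro ⟨m, hm, rfl⟩
        exact hsub hm ha
      refine ⟨hSinf, S.1.to_countable, S.2.2, none, ⟨hnone, ?_⟩, ?_, ?_⟩
      · intro U hU hnU
        obtain ⟨n, hsub⟩ := hexB _ (hU hnU)
        refine (hO n).subset ?_
        rintro a ⟨ha, hna⟩
        refine ⟨ha, fun h => hna ?_⟩
        obtain ⟨m, hm, rfl⟩ := h
        exact hsub hm
      · intro y hy hne
        obtain ⟨k, rfl⟩ := Option.ne_none_iff_exists'.mp hne
        refine ⟨{some k}, hopen_no_none _ (by simp), ?_⟩
        ext a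
        simp only [mem_inter_iff, mem_singleton_iff]
        exact ⟨fun h => h.1, fun h => ⟨h, h ▸ hy⟩⟩
      · rintro ⟨U, hU, hUS⟩
        have hnU : none ∈ U := by
          have : none ∈ U ∩ S.1 := hUS ▸ rfl
          exact this.1
        obtain ⟨n, hsub⟩ := hexB _ (hU hnU)
        have hne : (S.1 ∩ some '' B n).Nonempty := by
          by_contra h
          rw [Set.not_nonempty_iff_eq_empty] at h
          refine hSinf ((hO n).subset fun a ha => ⟨ha, fun hb => ?_⟩)
          exact absurd (Set.mem_inter ha hb) (h ▸ id)
        obtain ⟨a, haS, m, hm, rfl⟩ := hne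
        have : some m ∈ U ∩ S.1 := ⟨hsub hm, haS⟩
        rw [hUS] at this
        exact absurd (Set.mem_singleton_iff.mp this) (Option.some_ne_none m)
  -- Part 4: Gδ
  refine ⟨part1, part2, part3, ?_⟩
  obtain ⟨C, hC, hCeq⟩ := part2
  rw [part3, hCeq, Set.diff_eq, Set.compl_iUnion]
  exact (IsGδ.iInter fun n => (part1 n).isGδ).inter
    (IsGδ.iInter fun n => (hC n).isOpen_compl.isGδ)
end

section
/- If a topological space X has a pairwise disjoint family U of nonempty open subsets each of which is meager in itself, and ⋃U is dense in X, then X is meager in itself. -/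
/-!
Choose for every `u ∈ U` a sequence `(t u n)ₙ` of nowhere dense subsets of `u` covering `u`.
For fixed `n` the slice `⋃ u ∈ U, t u n` is again nowhere dense: each `u` is open and meets the
slice only in `t u n`, so the interior of the slice's closure misses every `u`, hence the slice
itself. The complement of the dense open set `⋃₀ U` is nowhere dense too, so `X` is covered by countably many nowhere dense sets.
-/

open Set

section

variable {X : Type*} [TopologicalSpace X]

lemma IsMeagre.exists_nat_isNowhereDense_cover {s : Set X} (hs : IsMeagre s) :
    ∃ f : ℕ → Set X, (∀ n, IsNowhereDense (f n)) ∧ s ⊆ ⋃ n, f n := by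
  obtain ⟨S, hS_nd, hS_count, hS_cover⟩ := isMeagre_iff_countable_union_isNowhereDense.mp hs
  -- `∅` is added so that the family is nonempty and can be enumerated by `ℕ`.
  obtain ⟨f, hf⟩ := (hS_count.insert ∅).exists_eq_range (insert_nonempty _ _)
  refine ⟨f, fun n => ?_, ?_⟩
  · rcases (hf ▸ mem_range_self n : f n ∈ insert ∅ S) with h | h
    · exact h ▸ isNowhereDense_empty
    · exact hS_nd _ h
  · rw [← sUnion_range, ← hf]
    exact hS_cover.trans (sUnion_mono (subset_insert _ _))

lemma exists_nat_isNowhereDense_cover_of_isMeagre_univ {u : Set X}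
    (hu : IsMeagre (univ : Set u)) :
    ∃ f : ℕ → Set X, (∀ n, f n ⊆ u) ∧ (∀ n, IsNowhereDense (f n)) ∧ u ⊆ ⋃ n, f n := by
  obtain ⟨f, hf_nd, hf_cover⟩ := hu.exists_nat_isNowhereDense_cover
  refine ⟨fun n => (↑) '' f n, fun n => Subtype.coe_image_subset u (f n),
    fun n => (hf_nd n).image_val, ?_⟩
  rw [← image_iUnion, univ_subset_iff.mp hf_cover, image_univ, Subtype.range_coe]

lemma isNowhereDense_biUnion_of_pairwiseDisjoint {ι : Type*} {I : Set ι} {u t : ι → Set X}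
    (hdisj : I.PairwiseDisjoint u) (hopen : ∀ i ∈ I, IsOpen (u i))
    (hsub : ∀ i ∈ I, t i ⊆ u i) (hnd : ∀ i ∈ I, IsNowhereDense (t i)) :
    IsNowhereDense (⋃ i ∈ I, t i) := by
  set V := interior (closure (⋃ i ∈ I, t i))
  have hpiece : ∀ i ∈ I, V ∩ u i ⊆ closure (t i) := by
    intro i hi
    have hslice : u i ∩ ⋃ j ∈ I, t j ⊆ t i := by
      rintro x ⟨hxu, hxt⟩
      obtain ⟨j, hj, hxj⟩ := mem_iUnion₂.mp hxt
      rwa [hdisj.elim hi hj (not_disjoint_iff.mpr ⟨x, hxu, hsub j hj hxj⟩)]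
    calc V ∩ u i ⊆ u i ∩ closure (⋃ j ∈ I, t j) := by
          rw [inter_comm]; exact inter_subset_inter_right _ interior_subset
      _ ⊆ closure (u i ∩ ⋃ j ∈ I, t j) := (hopen i hi).inter_closure
      _ ⊆ closure (t i) := closure_mono hslice
  have hmiss : ∀ i ∈ I, Disjoint V (u i) := by
    intro i hi
    have h := interior_maximal (hpiece i hi) (isOpen_interior.inter (hopen i hi))
    rw [hnd i hi] at h
    exact disjoint_iff_inter_eq_empty.mpr (subset_empty_iff.mp h)
  rw [isNowhereDense_iff_disjoint, disjoint_iUnion₂_left]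
  exact fun i hi => ((hmiss i hi).mono_right (hsub i hi)).symm

lemma IsOpen.isNowhereDense_compl {s : Set X} (hs : IsOpen s) (hd : Dense s) :
    IsNowhereDense sᶜ :=
  (isClosed_isNowhereDense_iff_compl.mpr ⟨by rwa [compl_compl], by rwa [compl_compl]⟩).2

end

theorem stmt13_general {X : Type*} [TopologicalSpace X] (U : Set (Set X))
    (hdisj : U.PairwiseDisjoint id) (hopen : ∀ u ∈ U, IsOpen u)
    (hmeager : ∀ u ∈ U, IsMeagre (Set.univ : Set ↥u))
    (hdense : Dense (⋃₀ U)) :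
    IsMeagre (Set.univ : Set X) := by
  choose! t ht_sub ht_nd ht_cover using
    fun u (hu : u ∈ U) => exists_nat_isNowhereDense_cover_of_isMeagre_univ (hmeager u hu)
  have hslice (n : ℕ) : IsNowhereDense (⋃ u ∈ U, t u n) :=
    isNowhereDense_biUnion_of_pairwiseDisjoint hdisj hopen
      (fun u hu => ht_sub u hu n) (fun u hu => ht_nd u hu n)
  have hcover : univ ⊆ (⋃₀ U)ᶜ ∪ ⋃ n, ⋃ u ∈ U, t u n := by
    intro x _
    by_cases hx : x ∈ ⋃₀ U
    · obtain ⟨u, hu, hxu⟩ := hx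
      obtain ⟨n, hn⟩ := mem_iUnion.mp (ht_cover u hu hxu)
      exact Or.inr (mem_iUnion.mpr ⟨n, mem_iUnion₂.mpr ⟨u, hu, hn⟩⟩)
    · exact Or.inl hx
  refine IsMeagre.mono hcover (IsMeagre.union ?_ (isMeagre_iUnion fun n => (hslice n).isMeagre))
  exact (isOpen_sUnion hopen).isNowhereDense_compl hdense |>.isMeagre

/-- If a space has a pairwise disjoint family of nonempty open subsets,
each meager in itself, whose union is dense, then the space is meager in itself. -/
theorem stmt13 {X : Type*} [TopologicalSpace X] (U : Set (Set X))
    (hdisj : U.PairwiseDisjoint id) (hopen : ∀ u ∈ U, IsOpen u)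
    (hne : ∀ u ∈ U, u.Nonempty)
    (hmeager : ∀ u ∈ U, IsMeagre (Set.univ : Set ↥u))
    (hdense : Dense (⋃₀ U)) :
    IsMeagre (Set.univ : Set X) :=
  stmt13_general U hdisj hopen hmeager hdense
end

section
/- Let X be a space whose set D of isolated points is dense in X, and let Y be a nonempty open subset of X such that S_c(Y) is a Baire space. Then the set G(S_c(Y), D) = {S ∪ F : S ∈ S_c(Y), F a finite (possibly empty) subset of D}, with the subspace topology from S_c(X), is a Baire space. -/
open Set TopologicalSpace Filter

open Topology

section AuxNCS
variable {X : Type*} [TopologicalSpace X] [T1Space X]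

lemma aux_E_isOpen {E : Set X} (hEiso : ∀ x ∈ E, IsOpen ({x} : Set X)) : IsOpen E := by
  have : E = ⋃ x ∈ E, ({x} : Set X) := by simp
  rw [this]; exact isOpen_biUnion hEiso

lemma aux_ncs_diff {S E : Set X} (hS : IsNCS X S) (hEfin : E.Finite)
    (hEiso : ∀ x ∈ E, IsOpen ({x} : Set X)) : IsNCS X (S \ E) := by
  obtain ⟨hinf, hcnt, hcl, x, ⟨hxS, hconv⟩, hiso, hniso⟩ := hS
  have hEopen : IsOpen E := aux_E_isOpen hEiso
  have hEcl : IsClosed E := hEfin.isClosed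
  have hxE : x ∉ E := by
    intro hxE
    exact hniso ⟨{x}, hEiso x hxE, Set.inter_eq_left.mpr (singleton_subset_iff.2 hxS)⟩
  refine ⟨hinf.diff hEfin, hcnt.mono diff_subset, ?_, x, ⟨⟨hxS, hxE⟩, ?_⟩, ?_, ?_⟩
  · rw [diff_eq]; exact hcl.inter hEopen.isClosed_compl
  · intro U hU hxU
    exact (hconv U hU hxU).subset (diff_subset_diff_left diff_subset)
  · rintro y ⟨hyS, hyE⟩ hyx
    obtain ⟨U, hU, hUS⟩ := hiso y hyS hyx
    refine ⟨U \ E, hU.sdiff hEcl, ?_⟩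
    have hyU : y ∈ U := by
      have : y ∈ U ∩ S := hUS ▸ rfl
      exact this.1
    ext z
    simp only [mem_inter_iff, mem_diff, mem_singleton_iff]
    constructor
    · rintro ⟨⟨hzU, hzE⟩, hzS, -⟩
      have : z ∈ U ∩ S := ⟨hzU, hzS⟩
      rw [hUS] at this; exact this
    · rintro rfl; exact ⟨⟨hyU, hyE⟩, hyS, hyE⟩
  · rintro ⟨U, hU, hUS⟩
    apply hniso
    refine ⟨U \ E, hU.sdiff hEcl, ?_⟩
    have : (U \ E) ∩ S = U ∩ (S \ E) := by
      ext z; simp only [mem_inter_iff, mem_diff]; tauto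
    rw [this, hUS]

lemma aux_ncs_union {S E : Set X} (hS : IsNCS X S) (hEfin : E.Finite)
    (hEiso : ∀ x ∈ E, IsOpen ({x} : Set X)) : IsNCS X (S ∪ E) := by
  obtain ⟨hinf, hcnt, hcl, x, ⟨hxS, hconv⟩, hiso, hniso⟩ := hS
  have hEcl : IsClosed E := hEfin.isClosed
  have hxE : x ∉ E := by
    intro hxE
    exact hniso ⟨{x}, hEiso x hxE, Set.inter_eq_left.mpr (singleton_subset_iff.2 hxS)⟩
  refine ⟨hinf.mono subset_union_left, hcnt.union hEfin.countable, hcl.union hEcl,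
    x, ⟨Or.inl hxS, ?_⟩, ?_, ?_⟩
  · intro U hU hxU
    rw [union_diff_distrib]
    exact (hconv U hU hxU).union hEfin.diff
  · intro y hy hyx
    by_cases hyE : y ∈ E
    · exact ⟨{y}, hEiso y hyE, Set.inter_eq_left.mpr (singleton_subset_iff.2 (Or.inr hyE))⟩
    · have hyS : y ∈ S := hy.resolve_right hyE
      obtain ⟨U, hU, hUS⟩ := hiso y hyS hyx
      refine ⟨U \ E, hU.sdiff hEcl, ?_⟩
      have hyU : y ∈ U := by
        have : y ∈ U ∩ S := hUS ▸ rfl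
        exact this.1
      ext z
      simp only [mem_inter_iff, mem_diff, mem_union, mem_singleton_iff]
      constructor
      · rintro ⟨⟨hzU, hzE⟩, hz⟩
        have hzS : z ∈ S := hz.resolve_right hzE
        have : z ∈ U ∩ S := ⟨hzU, hzS⟩
        rw [hUS] at this; exact this
      · rintro rfl; exact ⟨⟨hyU, hyE⟩, Or.inl hyS⟩
  · rintro ⟨U, hU, hUS⟩
    apply hniso
    refine ⟨U \ E, hU.sdiff hEcl, ?_⟩
    have hxU : x ∈ U := by
      have : x ∈ U ∩ (S ∪ E) := hUS ▸ rfl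
      exact this.1
    ext z
    simp only [mem_inter_iff, mem_diff, mem_singleton_iff]
    constructor
    · rintro ⟨⟨hzU, hzE⟩, hzS⟩
      have : z ∈ U ∩ (S ∪ E) := ⟨hzU, Or.inl hzS⟩
      rw [hUS] at this; exact this
    · rintro rfl; exact ⟨⟨hxU, hxE⟩, hxS⟩

end AuxNCS

lemma aux_transfer {α β : Type*} [TopologicalSpace α] [TopologicalSpace β] [BaireSpace α]
    (φ : α → β) (hc : Continuous φ) (hro : IsOpen (range φ))
    (hOP : ∀ O : Set α, IsOpen O → ∃ O' : Set β, IsOpen O' ∧ φ ⁻¹' O' = O)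
    (f : ℕ → Set β) (hfo : ∀ n, IsOpen (f n)) (hfd : ∀ n, Dense (f n))
    (U : Set β) (hU : IsOpen U) (T₀ : β) (hT₀U : T₀ ∈ U) (hT₀r : T₀ ∈ range φ) :
    (U ∩ ⋂ n, f n).Nonempty := by
  have hgo : ∀ n, IsOpen (φ ⁻¹' f n) := fun n => (hfo n).preimage hc
  have hgd : ∀ n, Dense (φ ⁻¹' f n) := by
    intro n
    rw [dense_iff_inter_open]
    intro O hO hOne
    obtain ⟨O', hO', hpre⟩ := hOP O hO
    obtain ⟨a, ha⟩ := hOne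
    have haO' : φ a ∈ O' ∩ range φ := ⟨by rw [← hpre] at ha; exact ha, mem_range_self a⟩
    obtain ⟨T, hT1, hTf⟩ := dense_iff_inter_open.1 (hfd n) (O' ∩ range φ)
      (hO'.inter hro) ⟨φ a, haO'⟩
    obtain ⟨a', rfl⟩ := hT1.2
    refine ⟨a', ?_, hTf⟩
    rw [← hpre]; exact hT1.1
  have hdense := BaireSpace.baire_property (fun n => φ ⁻¹' f n) hgo hgd
  obtain ⟨S₀, hS₀⟩ := hT₀r
  obtain ⟨S, hSU, hSg⟩ := dense_iff_inter_open.1 hdense (φ ⁻¹' U) (hU.preimage hc)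
    ⟨S₀, by rw [mem_preimage, hS₀]; exact hT₀U⟩
  exact ⟨φ S, hSU, mem_iInter.2 fun n => mem_iInter.1 hSg n⟩

section MainAux

variable {X : Type*} [TopologicalSpace X] [T1Space X]

/-- Subbasic Vietoris-open sets of the first kind. -/
lemma aux_vsub1 {W : Set X} (hW : IsOpen W) :
    IsOpen[vietoris X] {A : Set X | A ⊆ W} :=
  TopologicalSpace.isOpen_generateFrom_of_mem (Or.inl ⟨W, hW, rfl⟩)

/-- Subbasic Vietoris-open sets of the second kind. -/
lemma aux_vsub2 {W : Set X} (hW : IsOpen W) :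
    IsOpen[vietoris X] {A : Set X | (A ∩ W).Nonempty} :=
  TopologicalSpace.isOpen_generateFrom_of_mem (Or.inr ⟨W, hW, rfl⟩)

lemma aux_coe_cont {p : Sc X → Prop} :
    Continuous[instTopologicalSpaceSubtype, vietoris X] (fun T : {T : Sc X // p T} => T.1.1) :=
  @Continuous.comp _ _ _ _ (inferInstance : TopologicalSpace (Sc X)) (vietoris X) _ _
    (@continuous_induced_dom (Sc X) (Set X) (fun S : Sc X => S.1) (vietoris X))
    continuous_subtype_val

lemma aux_vpre {p : Sc X → Prop} {s : Set (Set X)} (hs : IsOpen[vietoris X] s) :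
    IsOpen ((fun T : {T : Sc X // p T} => (T.1.1 : Set X)) ⁻¹' s) :=
  @Continuous.isOpen_preimage _ _ _ (vietoris X) _ aux_coe_cont s hs

end MainAux

/-- If the set `D` of isolated points of `X` is dense and `Y` is a nonempty
open subset of `X` with `S_c(Y)` Baire, then
`G(S_c(Y), D) = {S ∪ F : S ∈ S_c(Y), F ⊆ D finite (possibly empty)}` is Baire. -/
theorem stmt14 {X : Type*} [TopologicalSpace X] [T35Space X]
    (hD : Dense {x : X | IsOpen ({x} : Set X)})
    (Y : Set X) (hopen : IsOpen Y) (hYne : Y.Nonempty)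
    (hne : ∃ S : Set X, IsNCS X S ∧ S ⊆ Y)
    (hB : BaireSpace {S : Sc X // S.1 ⊆ Y}) :
    BaireSpace {T : Sc X // ∃ S F : Set X, IsNCS X S ∧ S ⊆ Y ∧
      F ⊆ {x : X | IsOpen ({x} : Set X)} ∧ F.Finite ∧ T.1 = S ∪ F} := by
  classical
  haveI := hB
  constructor
  intro f hfo hfd
  rw [dense_iff_inter_open]
  intro U hU hUne
  obtain ⟨T₀, hT₀U⟩ := hUne
  set E : Set X := T₀.1.1 \ Y with hEdef
  obtain ⟨S₀', F₀, hS₀NCS, hS₀Y, hF₀D, hF₀fin, hT₀eq⟩ := T₀.2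
  have hEF₀ : E ⊆ F₀ := by
    rintro z ⟨hzT, hzY⟩
    rw [hT₀eq] at hzT
    exact hzT.resolve_left fun h => hzY (hS₀Y h)
  have hEfin : E.Finite := hF₀fin.subset hEF₀
  have hED : ∀ x ∈ E, IsOpen ({x} : Set X) := fun x hx => hF₀D (hEF₀ hx)
  have hEY : ∀ z ∈ E, z ∉ Y := fun z hz => hz.2
  have hEopen : IsOpen E := aux_E_isOpen hED
  have hEcl : IsClosed E := hEfin.isClosed
  -- the embedding φ : S_c(Y) → G
  let φ : {S : Sc X // S.1 ⊆ Y} → {T : Sc X // ∃ S F : Set X, IsNCS X S ∧ S ⊆ Y ∧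
      F ⊆ {x : X | IsOpen ({x} : Set X)} ∧ F.Finite ∧ T.1 = S ∪ F} := fun S =>
    ⟨⟨S.1.1 ∪ E, aux_ncs_union S.1.2 hEfin hED⟩, S.1.1, E, S.1.2, S.2, hED, hEfin, rfl⟩
  -- continuity of φ
  have hφcont : Continuous φ := by
    apply continuous_induced_rng.2
    apply continuous_induced_rng.2
    refine continuous_generateFrom_iff.mpr ?_
    rintro t (⟨W, hW, rfl⟩ | ⟨W, hW, rfl⟩)
    · show IsOpen ((fun S : {S : Sc X // S.1 ⊆ Y} => (S.1.1 ∪ E : Set X)) ⁻¹' {A | A ⊆ W})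
      by_cases hEW : E ⊆ W
      · have : (fun S : {S : Sc X // S.1 ⊆ Y} => (S.1.1 ∪ E : Set X)) ⁻¹' {A | A ⊆ W}
            = (fun S : {S : Sc X // S.1 ⊆ Y} => (S.1.1 : Set X)) ⁻¹' {A | A ⊆ W} := by
          ext S
          simp only [mem_preimage, mem_setOf_eq, union_subset_iff]
          exact ⟨fun h => h.1, fun h => ⟨h, hEW⟩⟩
        rw [this]
        exact aux_vpre (aux_vsub1 hW)
      · have : (fun S : {S : Sc X // S.1 ⊆ Y} => (S.1.1 ∪ E : Set X)) ⁻¹' {A | A ⊆ W}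
            = ∅ := by
          ext S
          simp only [mem_preimage, mem_setOf_eq, union_subset_iff, mem_empty_iff_false,
            iff_false, not_and]
          exact fun _ => hEW
        rw [this]; exact isOpen_empty
    · show IsOpen ((fun S : {S : Sc X // S.1 ⊆ Y} => (S.1.1 ∪ E : Set X)) ⁻¹'
        {A | (A ∩ W).Nonempty})
      by_cases hEW : (E ∩ W).Nonempty
      · have : (fun S : {S : Sc X // S.1 ⊆ Y} => (S.1.1 ∪ E : Set X)) ⁻¹'
            {A | (A ∩ W).Nonempty} = univ := by
          refine eq_univ_of_forall fun S => ?_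
          exact hEW.mono (inter_subset_inter_left _ subset_union_right)
        rw [this]; exact isOpen_univ
      · rw [not_nonempty_iff_eq_empty] at hEW
        have : (fun S : {S : Sc X // S.1 ⊆ Y} => (S.1.1 ∪ E : Set X)) ⁻¹'
            {A | (A ∩ W).Nonempty}
            = (fun S : {S : Sc X // S.1 ⊆ Y} => (S.1.1 : Set X)) ⁻¹'
              {A | (A ∩ W).Nonempty} := by
          ext S
          simp only [mem_preimage, mem_setOf_eq]
          rw [union_inter_distrib_right, hEW, union_empty]
        rw [this]
        exact aux_vpre (aux_vsub2 hW)
  -- range of φ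
  have hrange : range φ = {T | T.1.1 ⊆ Y ∪ E ∧ E ⊆ T.1.1} := by
    apply Subset.antisymm
    · rintro _ ⟨S, rfl⟩
      exact ⟨union_subset (S.2.trans subset_union_left) subset_union_right,
        subset_union_right⟩
    · rintro T ⟨hTYE, hET⟩
      have hdiffY : T.1.1 \ E ⊆ Y := by
        rintro z ⟨hzT, hzE⟩
        exact (hTYE hzT).resolve_right hzE
      refine ⟨⟨⟨T.1.1 \ E, aux_ncs_diff T.1.2 hEfin hED⟩, hdiffY⟩, ?_⟩
      apply Subtype.ext
      apply Subtype.ext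
      exact diff_union_of_subset hET
  have hro : IsOpen (range φ) := by
    rw [hrange]
    have h1 : IsOpen {T : {T : Sc X // ∃ S F : Set X, IsNCS X S ∧ S ⊆ Y ∧
        F ⊆ {x : X | IsOpen ({x} : Set X)} ∧ F.Finite ∧ T.1 = S ∪ F} | T.1.1 ⊆ Y ∪ E} :=
      aux_vpre (aux_vsub1 (hopen.union hEopen))
    have h2 : IsOpen {T : {T : Sc X // ∃ S F : Set X, IsNCS X S ∧ S ⊆ Y ∧
        F ⊆ {x : X | IsOpen ({x} : Set X)} ∧ F.Finite ∧ T.1 = S ∪ F} | E ⊆ T.1.1} := by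
      have heq : {T : {T : Sc X // ∃ S F : Set X, IsNCS X S ∧ S ⊆ Y ∧
          F ⊆ {x : X | IsOpen ({x} : Set X)} ∧ F.Finite ∧ T.1 = S ∪ F} | E ⊆ T.1.1}
          = ⋂ e ∈ E, {T | (T.1.1 ∩ {e}).Nonempty} := by
        ext T
        simp only [mem_setOf_eq, mem_iInter, inter_singleton_nonempty]
        exact ⟨fun h e he => h he, fun h e he => h e he⟩
      rw [heq]
      exact hEfin.isOpen_biInter fun e he => aux_vpre (aux_vsub2 (hED e he))
    exact h1.inter h2
  -- preimages of opens are opens: the inverse is continuous on the range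
  have hOP : ∀ O : Set {S : Sc X // S.1 ⊆ Y}, IsOpen O →
      ∃ O' : Set {T : Sc X // ∃ S F : Set X, IsNCS X S ∧ S ⊆ Y ∧
        F ⊆ {x : X | IsOpen ({x} : Set X)} ∧ F.Finite ∧ T.1 = S ∪ F},
      IsOpen O' ∧ φ ⁻¹' O' = O := by
    intro O hO
    rcases isOpen_induced_iff.1 hO with ⟨O₁, hO₁, rfl⟩
    rcases (@isOpen_induced_iff (Sc X) (Set X) (vietoris X) O₁ (fun S : Sc X => S.1)).1 hO₁ with ⟨t, ht, rfl⟩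
    -- so the open set is the preimage of the vietoris-open `t` under `S ↦ S.1.1`.
    -- we transform it into a preimage along `S ↦ S.1.1 ∪ E`
    have key : ∀ t : Set (Set X), TopologicalSpace.GenerateOpen
        ({t | ∃ U : Set X, IsOpen U ∧ t = {S : Set X | S ⊆ U}} ∪
         {t | ∃ U : Set X, IsOpen U ∧ t = {S : Set X | (S ∩ U).Nonempty}}) t →
        ∃ t' : Set (Set X), IsOpen[vietoris X] t' ∧
          (fun S : {S : Sc X // S.1 ⊆ Y} => (S.1.1 ∪ E : Set X)) ⁻¹' t'
            = (fun S : {S : Sc X // S.1 ⊆ Y} => (S.1.1 : Set X)) ⁻¹' t := by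
      intro t ht
      induction ht with
      | basic s hs =>
        rcases hs with ⟨W, hW, rfl⟩ | ⟨W, hW, rfl⟩
        · refine ⟨{A | A ⊆ W ∪ E}, aux_vsub1 (hW.union hEopen), ?_⟩
          ext S
          simp only [mem_preimage, mem_setOf_eq, union_subset_iff]
          constructor
          · rintro ⟨hSW, -⟩ z hz
            exact (hSW hz).resolve_right fun hzE => hEY z hzE (S.2 hz)
          · intro h
            exact ⟨h.trans subset_union_left, subset_union_right⟩
        · refine ⟨{A | (A ∩ (W \ E)).Nonempty}, aux_vsub2 (hW.sdiff hEcl), ?_⟩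
          ext S
          simp only [mem_preimage, mem_setOf_eq]
          have : (S.1.1 ∪ E) ∩ (W \ E) = S.1.1 ∩ W := by
            ext z
            simp only [mem_inter_iff, mem_union, mem_diff]
            constructor
            · rintro ⟨hz1 | hz1, hzW, hzE⟩
              · exact ⟨hz1, hzW⟩
              · exact absurd hz1 hzE
            · rintro ⟨hzS, hzW⟩
              exact ⟨Or.inl hzS, hzW, fun hzE => hEY z hzE (S.2 hzS)⟩
          rw [this]
      | univ => exact ⟨univ, TopologicalSpace.GenerateOpen.univ, rfl⟩
      | inter s₁ s₂ _ _ ih₁ ih₂ =>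
        obtain ⟨t₁, ht₁, hpre₁⟩ := ih₁
        obtain ⟨t₂, ht₂, hpre₂⟩ := ih₂
        refine ⟨t₁ ∩ t₂, TopologicalSpace.GenerateOpen.inter _ _ ht₁ ht₂, ?_⟩
        rw [preimage_inter, preimage_inter, hpre₁, hpre₂]
      | sUnion s hs ih =>
        choose t' ht' hpre using ih
        refine ⟨⋃₀ {v | ∃ u, ∃ hu : u ∈ s, v = t' u hu}, ?_, ?_⟩
        · exact TopologicalSpace.GenerateOpen.sUnion _
            (by rintro v ⟨u, hu, rfl⟩; exact ht' u hu)
        · ext S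
          simp only [mem_preimage, mem_sUnion, mem_setOf_eq]
          constructor
          · rintro ⟨v, ⟨u, hu, rfl⟩, hSv⟩
            exact ⟨u, hu, (Set.ext_iff.1 (hpre u hu) S).1 hSv⟩
          · rintro ⟨u, hu, hSu⟩
            exact ⟨t' u hu, ⟨u, hu, rfl⟩, (Set.ext_iff.1 (hpre u hu) S).2 hSu⟩
    obtain ⟨t', ht', hpre⟩ := key t ht
    refine ⟨(fun T : {T : Sc X // ∃ S F : Set X, IsNCS X S ∧ S ⊆ Y ∧
        F ⊆ {x : X | IsOpen ({x} : Set X)} ∧ F.Finite ∧ T.1 = S ∪ F} => (T.1.1 : Set X))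
        ⁻¹' t', aux_vpre ht', ?_⟩
    ext S
    exact Set.ext_iff.1 hpre S
  -- T₀ is in the range of φ
  have hT₀r : T₀ ∈ range φ := by
    rw [hrange]
    constructor
    · intro z hz
      by_cases hzY : z ∈ Y
      · exact Or.inl hzY
      · exact Or.inr ⟨hz, hzY⟩
    · exact diff_subset
  exact aux_transfer φ hφcont hro hOP f hfo hfd U hU T₀ hT₀U hT₀r
end

section
/- The hyperspace S_c(ω₁) of nontrivial convergent sequences of the ordinal space ω₁ (with the order topology), equipped with the Vietoris topology, is a Baire space. -/
open Set TopologicalSpace Filter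

/-- The space `ω₁` of countable ordinals. -/
def Omega1 : Type _ := {o : Ordinal // o < (Cardinal.aleph 1).ord}

noncomputable instance : LinearOrder Omega1 :=
  inferInstanceAs (LinearOrder {o : Ordinal // o < (Cardinal.aleph 1).ord})

/-- `ω₁` carries the order topology. -/
noncomputable instance : TopologicalSpace Omega1 := Preorder.topology Omega1

instance : OrderTopology Omega1 := ⟨rfl⟩

namespace Stmt15Aux

noncomputable section

lemma aleph1_ord_isLimit : Order.IsSuccLimit ((Cardinal.aleph 1).ord) :=
  Cardinal.isSuccLimit_ord (Cardinal.aleph0_le_aleph 1)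

def osucc (a : Omega1) : Omega1 := ⟨Order.succ a.1, aleph1_ord_isLimit.succ_lt a.2⟩

lemma omega1_lt_iff {a b : Omega1} : a < b ↔ a.1 < b.1 := Iff.rfl
lemma omega1_le_iff {a b : Omega1} : a ≤ b ↔ a.1 ≤ b.1 := Iff.rfl

lemma lt_osucc (a : Omega1) : a < osucc a := by
  rw [omega1_lt_iff]; exact Order.lt_succ a.1

lemma osucc_le_of_lt {a b : Omega1} (h : a < b) : osucc a ≤ b := by
  rw [omega1_le_iff]; exact Order.succ_le_of_lt h

lemma lt_osucc_iff {a b : Omega1} : a < osucc b ↔ a ≤ b := by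
  rw [omega1_lt_iff, omega1_le_iff]; exact Order.lt_succ_iff

lemma omega1_lt_wf : WellFounded ((· < ·) : Omega1 → Omega1 → Prop) :=
  InvImage.wf (fun a : Omega1 => a.1) Ordinal.lt_wf

lemma isOpen_Ioc' (a b : Omega1) : IsOpen (Ioc a b) := by
  have : Ioc a b = Ioo a (osucc b) := by
    ext z; simp only [mem_Ioc, mem_Ioo, lt_osucc_iff]
  rw [this]; exact isOpen_Ioo

lemma isOpen_singleton_osucc (a : Omega1) : IsOpen ({osucc a} : Set Omega1) := by
  have : ({osucc a} : Set Omega1) = Ioc a (osucc a) := by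
    ext z
    simp only [mem_singleton_iff, mem_Ioc]
    constructor
    · rintro rfl; exact ⟨lt_osucc a, le_rfl⟩
    · rintro ⟨h1, h2⟩; exact le_antisymm h2 (osucc_le_of_lt h1)
  rw [this]; exact isOpen_Ioc' _ _

lemma singleton_open_of_min {p : Omega1} (h : ∀ y, ¬ y < p) : IsOpen ({p} : Set Omega1) := by
  have : ({p} : Set Omega1) = Iio (osucc p) := by
    ext z
    simp only [mem_singleton_iff, mem_Iio, lt_osucc_iff]
    constructor
    · rintro rfl; exact le_rfl
    · intro hz; rcases lt_or_eq_of_le hz with h' | h'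
      · exact absurd h' (h z)
      · exact h'
  rw [this]; exact isOpen_Iio

lemma exists_isOpen_singleton_mem {U : Set Omega1} (hU : IsOpen U) {p : Omega1} (hp : p ∈ U) :
    ∃ q ∈ U, IsOpen ({q} : Set Omega1) := by
  by_cases h : ∃ l, l < p
  · obtain ⟨l, hl, hsub⟩ := exists_Ioc_subset_of_mem_nhds (hU.mem_nhds hp) h
    exact ⟨osucc l, hsub ⟨lt_osucc l, osucc_le_of_lt hl⟩, isOpen_singleton_osucc l⟩
  · push_neg at h
    exact ⟨p, hp, singleton_open_of_min (fun y hy => (h y).not_gt hy)⟩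

/-- `x` has a countable cofinal (below) sequence. -/
def CofSeq (x : Omega1) : Prop :=
  ∃ f : ℕ → Omega1, (∀ n, f n < x) ∧ ∀ c, c < x → ∃ n, c < f n

open Classical in
def cseq (x : Omega1) : ℕ → Omega1 :=
  if h : CofSeq x then h.choose else fun _ => x

lemma cseq_lt {x : Omega1} (h : CofSeq x) (n : ℕ) : cseq x n < x := by
  unfold cseq
  rw [dif_pos h]; exact h.choose_spec.1 n

lemma cseq_cof {x : Omega1} (h : CofSeq x) {c : Omega1} (hc : c < x) : ∃ n, c < cseq x n := by
  unfold cseq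
  rw [dif_pos h]; exact h.choose_spec.2 c hc

lemma exists_between_of_cofseq {x a : Omega1} (h : CofSeq x) (ha : a < x) :
    ∃ s, a < s ∧ s < x := by
  obtain ⟨n, hn⟩ := cseq_cof h ha
  exact ⟨cseq x n, hn, cseq_lt h n⟩

lemma osucc_lt_of_cofseq {x a : Omega1} (h : CofSeq x) (ha : a < x) : osucc a < x := by
  obtain ⟨s, h1, h2⟩ := exists_between_of_cofseq h ha
  exact lt_of_le_of_lt (osucc_le_of_lt h1) h2

def Phi (x : Omega1) : ℕ → Omega1
  | 0 => cseq x 0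
  | n + 1 => max (Phi x n) (cseq x (n + 1))

lemma Phi_lt {x : Omega1} (h : CofSeq x) (n : ℕ) : Phi x n < x := by
  induction n with
  | zero => exact cseq_lt h 0
  | succ n ih => exact max_lt ih (cseq_lt h _)

lemma Phi_mono (x : Omega1) : Monotone (Phi x) := by
  apply monotone_nat_of_le_succ
  intro n; exact le_max_left _ _

lemma cseq_le_Phi (x : Omega1) (n : ℕ) : cseq x n ≤ Phi x n := by
  cases n with
  | zero => exact le_rfl
  | succ n => exact le_max_right _ _

lemma Phi_cof {x : Omega1} (h : CofSeq x) {c : Omega1} (hc : c < x) : ∃ n, c < Phi x n := by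
  obtain ⟨n, hn⟩ := cseq_cof h hc
  exact ⟨n, lt_of_lt_of_le hn (cseq_le_Phi x n)⟩

lemma exists_max_of_finite {B : Set Omega1} (hB : B.Finite) (hne : B.Nonempty) :
    ∃ m ∈ B, ∀ b ∈ B, b ≤ m := by
  obtain ⟨m, hm, h⟩ := Set.Finite.exists_maximalFor id B hB hne
  refine ⟨m, hm, fun b hb => ?_⟩
  rcases le_total b m with h' | h'
  · exact h'
  · exact h hb h'


/-- A set trapped finitely below `x` and above `x`, containing `x`, is closed. -/
lemma closed_of_traps {S : Set Omega1} {x : Omega1} (hx : x ∈ S)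
    (hbelow : ∀ β, β < x → (S ∩ Iic β).Finite)
    (habove : (S ∩ Ioi x).Finite) : IsClosed S := by
  rw [← isOpen_compl_iff]
  rw [isOpen_iff_mem_nhds]
  intro y hy
  rcases lt_trichotomy y x with hyx | rfl | hxy
  · -- y < x
    have hBfin : (S ∩ Iic y).Finite := hbelow y hyx
    -- t := min of S ∩ Ioi y, nonempty since x ∈ it
    have hne : (S ∩ Ioi y).Nonempty := ⟨x, hx, hyx⟩
    set t := omega1_lt_wf.min (S ∩ Ioi y) hne with ht
    have htmem : t ∈ S ∩ Ioi y := omega1_lt_wf.min_mem _ hne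
    have htmin : ∀ s ∈ S ∩ Ioi y, t ≤ s := fun s hs =>
      not_lt.1 (omega1_lt_wf.not_lt_min _ hs)
    by_cases hlow : (S ∩ Iio y).Nonempty
    · have hfin : (S ∩ Iio y).Finite := hBfin.subset (by
        intro z hz; exact ⟨hz.1, le_of_lt (mem_Iio.1 hz.2)⟩)
      obtain ⟨a, ha, hamax⟩ := exists_max_of_finite hfin hlow
      refine Filter.mem_of_superset ((isOpen_Ioo (a := a) (b := t)).mem_nhds ⟨ha.2, htmem.2⟩) ?_
      intro z hz hzS
      rcases lt_trichotomy z y with h | rfl | h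
      · exact absurd (hamax z ⟨hzS, h⟩) (not_le.2 hz.1)
      · exact hy hzS
      · exact absurd hz.2 (not_lt.2 (htmin z ⟨hzS, h⟩))
    · refine Filter.mem_of_superset ((isOpen_Iio (a := t)).mem_nhds htmem.2) ?_
      intro z hz hzS
      rcases lt_trichotomy z y with h | rfl | h
      · exact hlow ⟨z, hzS, h⟩
      · exact hy hzS
      · exact absurd hz (not_lt.2 (htmin z ⟨hzS, h⟩))
  · exact absurd hx hy
  · -- x < y
    have haset : ((S ∩ Ioi x) ∩ Iio y ∪ {x}).Finite :=
      (habove.subset (inter_subset_left)).union (finite_singleton x)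
    have hane : ((S ∩ Ioi x) ∩ Iio y ∪ {x}).Nonempty := ⟨x, Or.inr rfl⟩
    obtain ⟨a, ha, hamax⟩ := exists_max_of_finite haset hane
    have hax : x ≤ a := hamax x (Or.inr rfl)
    have hay : a < y := by
      rcases ha with h | h
      · exact h.2
      · rw [mem_singleton_iff] at h; rw [h]; exact hxy
    have key : ∀ z, a < z → z ∈ S → y ≤ z := by
      intro z hz hzS
      by_contra h
      push_neg at h
      have hzx : x < z := lt_of_le_of_lt hax hz
      exact absurd (hamax z (Or.inl ⟨⟨hzS, hzx⟩, h⟩)) (not_le.2 hz)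
    by_cases hhi : (S ∩ Ioi y).Nonempty
    · set t := omega1_lt_wf.min (S ∩ Ioi y) hhi with ht
      have htmem : t ∈ S ∩ Ioi y := omega1_lt_wf.min_mem _ hhi
      have htmin : ∀ s ∈ S ∩ Ioi y, t ≤ s := fun s hs =>
        not_lt.1 (omega1_lt_wf.not_lt_min _ hs)
      refine Filter.mem_of_superset ((isOpen_Ioo (a := a) (b := t)).mem_nhds ⟨hay, htmem.2⟩) ?_
      intro z hz hzS
      have h1 := key z hz.1 hzS
      rcases lt_or_eq_of_le h1 with h | h
      · exact absurd hz.2 (not_lt.2 (htmin z ⟨hzS, h⟩))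
      · exact hy (h ▸ hzS)
    · refine Filter.mem_of_superset ((isOpen_Ioi (a := a)).mem_nhds hay) ?_
      intro z hz hzS
      have h1 := key z hz hzS
      rcases lt_or_eq_of_le h1 with h | h
      · exact hhi ⟨z, hzS, h⟩
      · exact hy (h ▸ hzS)

lemma ncs_gen {S : Set Omega1} {x : Omega1}
    (hx : x ∈ S) (hcnt : S.Countable)
    (hlt : ∃ c, c < x)
    (hiso : ∀ y ∈ S, y ≠ x → IsOpen ({y} : Set Omega1))
    (hbelow : ∀ β, β < x → (S ∩ Iic β).Finite)
    (habove : (S ∩ Ioi x).Finite)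
    (hcof : ∀ c, c < x → ∃ s ∈ S, c < s ∧ s < x) :
    IsNCS Omega1 S := by
  obtain ⟨c₀, hc₀⟩ := hlt
  have hinf : S.Infinite := by
    intro hfin
    have hfin' : (S ∩ Iio x).Finite := hfin.subset inter_subset_left
    obtain ⟨s₀, hs₀S, hs₀1, hs₀2⟩ := hcof c₀ hc₀
    obtain ⟨m, hm, hmax⟩ := exists_max_of_finite hfin' ⟨s₀, hs₀S, hs₀2⟩
    obtain ⟨s, hsS, hs1, hs2⟩ := hcof m hm.2
    exact absurd (hmax s ⟨hsS, hs2⟩) (not_le.2 hs1)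
  refine ⟨hinf, hcnt, closed_of_traps hx hbelow habove, x, ⟨hx, ?_⟩, ?_, ?_⟩
  · intro U hU hxU
    obtain ⟨l, hl, hsub⟩ := exists_Ioc_subset_of_mem_nhds (hU.mem_nhds hxU) ⟨c₀, hc₀⟩
    refine ((hbelow l hl).union habove).subset ?_
    intro z ⟨hzS, hzU⟩
    by_cases h : z ∈ Ioc l x
    · exact absurd (hsub h) hzU
    · simp only [mem_Ioc, not_and_or, not_lt, not_le] at h
      rcases h with h | h
      · exact Or.inl ⟨hzS, h⟩
      · exact Or.inr ⟨hzS, h⟩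
  · intro y hy hne
    refine ⟨{y}, hiso y hy hne, ?_⟩
    ext z
    simp only [mem_inter_iff, mem_singleton_iff]
    exact ⟨fun h => h.1, fun h => ⟨h, h ▸ hy⟩⟩
  · rintro ⟨U, hU, hUS⟩
    have hxU : x ∈ U := by
      have : x ∈ U ∩ S := by rw [hUS]; exact rfl
      exact this.1
    obtain ⟨l, hl, hsub⟩ := exists_Ioc_subset_of_mem_nhds (hU.mem_nhds hxU) ⟨c₀, hc₀⟩
    obtain ⟨s, hsS, hs1, hs2⟩ := hcof l hl
    have : s ∈ U ∩ S := ⟨hsub ⟨hs1, le_of_lt hs2⟩, hsS⟩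
    rw [hUS] at this
    exact absurd this (by simp [ne_of_lt hs2])


/-- Extraction of a basic Vietoris neighborhood. -/
lemma vietoris_extract {X : Type*} [TopologicalSpace X] {G : Set (Set X)}
    (hG : (vietoris X).IsOpen G) {A : Set X} (hA : A ∈ G) :
    ∃ (U₀ : Set X) (𝒰 : Finset (Set X)), IsOpen U₀ ∧ A ⊆ U₀ ∧
      (∀ U ∈ 𝒰, IsOpen U ∧ (A ∩ U).Nonempty) ∧
      (∀ B : Set X, B ⊆ U₀ → (∀ U ∈ 𝒰, (B ∩ U).Nonempty) → B ∈ G) := by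
  have hG' : TopologicalSpace.GenerateOpen
      ({t | ∃ U : Set X, IsOpen U ∧ t = {S : Set X | S ⊆ U}} ∪
       {t | ∃ U : Set X, IsOpen U ∧ t = {S : Set X | (S ∩ U).Nonempty}}) G := hG
  clear hG
  induction hG' with
  | basic t ht =>
    rcases ht with ⟨U, hU, rfl⟩ | ⟨U, hU, rfl⟩
    · exact ⟨U, ∅, hU, hA, by simp, fun B hB _ => hB⟩
    · refine ⟨univ, {U}, isOpen_univ, subset_univ A, ?_, ?_⟩
      · intro V hV
        rw [Finset.mem_singleton] at hV
        subst hV; exact ⟨hU, hA⟩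
      · intro B _ hB
        exact hB U (Finset.mem_singleton_self U)
  | univ => exact ⟨univ, ∅, isOpen_univ, subset_univ A, by simp, fun B _ _ => trivial⟩
  | inter s t _ _ ihs iht =>
    obtain ⟨U₀, 𝒰, h1, h2, h3, h4⟩ := ihs hA.1
    obtain ⟨V₀, 𝒱, g1, g2, g3, g4⟩ := iht hA.2
    classical
    refine ⟨U₀ ∩ V₀, 𝒰 ∪ 𝒱, h1.inter g1, subset_inter h2 g2, ?_, ?_⟩
    · intro U hU
      rcases Finset.mem_union.1 hU with h | h
      · exact h3 U h
      · exact g3 U h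
    · intro B hB hmeets
      constructor
      · exact h4 B (hB.trans inter_subset_left) fun U hU => hmeets U (Finset.mem_union_left _ hU)
      · exact g4 B (hB.trans inter_subset_right) fun U hU => hmeets U (Finset.mem_union_right _ hU)
  | sUnion 𝒮 _ ih =>
    obtain ⟨t, ht, hAt⟩ := hA
    obtain ⟨U₀, 𝒰, h1, h2, h3, h4⟩ := ih t ht hAt
    exact ⟨U₀, 𝒰, h1, h2, h3, fun B hB hm => ⟨t, ht, h4 B hB hm⟩⟩

lemma sc_open {G : Set (Set Omega1)} (h : (vietoris Omega1).IsOpen G) :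
    IsOpen {T : Sc Omega1 | T.1 ∈ G} := by
  show (TopologicalSpace.induced (fun S : Sc Omega1 => S.1) (vietoris Omega1)).IsOpen _
  exact ⟨G, h, rfl⟩

lemma sc_open_extract {D : Set (Sc Omega1)} (h : IsOpen D) :
    ∃ G : Set (Set Omega1), (vietoris Omega1).IsOpen G ∧ D = {T : Sc Omega1 | T.1 ∈ G} := by
  have h' : (TopologicalSpace.induced (fun S : Sc Omega1 => S.1) (vietoris Omega1)).IsOpen D := h
  obtain ⟨G, hG, hpre⟩ := h'
  exact ⟨G, hG, by rw [← hpre]; rfl⟩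

/-- The basic boxes of our construction. -/
def NBox (F : Set Omega1) (c x : Omega1) : Set (Sc Omega1) :=
  {T : Sc Omega1 | F ⊆ T.1 ∧ T.1 ⊆ F ∪ Ioc c x}

structure VData (F : Set Omega1) (c x : Omega1) : Prop where
  fin : F.Finite
  sing : ∀ f ∈ F, IsOpen ({f} : Set Omega1)
  clt : c < x
  cof : CofSeq x

lemma nbox_isOpen {F : Set Omega1} {c x : Omega1} (hV : VData F c x) :
    IsOpen (NBox F c x) := by
  have h1 : (vietoris Omega1).IsOpen {A : Set Omega1 | A ⊆ F ∪ Ioc c x} := by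
    refine TopologicalSpace.GenerateOpen.basic _ (Or.inl ⟨F ∪ Ioc c x, ?_, rfl⟩)
    have : F ∪ Ioc c x = (⋃ f ∈ F, {f}) ∪ Ioc c x := by simp
    rw [this]
    exact (isOpen_biUnion (fun f hf => hV.sing f hf)).union (isOpen_Ioc' c x)
  have key : NBox F c x =
      {T : Sc Omega1 | T.1 ∈ {A : Set Omega1 | A ⊆ F ∪ Ioc c x}} ∩
      ⋂ f ∈ F, {T : Sc Omega1 | T.1 ∈ {A : Set Omega1 | (A ∩ {f}).Nonempty}} := by
    ext T
    simp only [NBox, mem_setOf_eq, mem_inter_iff, mem_iInter]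
    constructor
    · rintro ⟨hFT, hTsub⟩
      exact ⟨hTsub, fun f hf => ⟨f, hFT hf, rfl⟩⟩
    · rintro ⟨hTsub, hmeet⟩
      refine ⟨fun f hf => ?_, hTsub⟩
      obtain ⟨z, hz1, hz2⟩ := hmeet f hf
      rw [mem_singleton_iff] at hz2
      exact hz2 ▸ hz1
  rw [key]
  refine (sc_open h1).inter (hV.fin.isOpen_biInter fun f hf => sc_open ?_)
  exact TopologicalSpace.GenerateOpen.basic _ (Or.inr ⟨{f}, hV.sing f hf, rfl⟩)


def wseq (c x : Omega1) : ℕ → Omega1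
  | 0 => c
  | n + 1 => max (osucc (wseq c x n)) (cseq x n)

lemma nbox_nonempty {F : Set Omega1} {c x : Omega1} (hV : VData F c x) :
    ∃ T : Sc Omega1, T ∈ NBox F c x := by
  have hw_lt : ∀ n, wseq c x n < x := by
    intro n
    induction n with
    | zero => exact hV.clt
    | succ n ih => exact max_lt (osucc_lt_of_cofseq hV.cof ih) (cseq_lt hV.cof n)
  have hw_ge : ∀ n, c ≤ wseq c x n := by
    intro n
    induction n with
    | zero => exact le_rfl
    | succ n ih => exact le_trans (le_trans ih (le_of_lt (lt_osucc _))) (le_max_left _ _)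
  set g : ℕ → Omega1 := fun n => osucc (wseq c x n) with hg
  have hgc : ∀ n, c < g n := fun n => lt_of_le_of_lt (hw_ge n) (lt_osucc _)
  have hglt : ∀ n, g n < x := fun n => osucc_lt_of_cofseq hV.cof (hw_lt n)
  have hwmono : ∀ n, wseq c x n < wseq c x (n + 1) := fun n =>
    lt_of_lt_of_le (lt_osucc _) (le_max_left _ _)
  have hgmono : StrictMono g := by
    apply strictMono_nat_of_lt_succ
    intro n
    exact lt_of_le_of_lt (osucc_le_of_lt (hwmono n)) (lt_osucc _)
  have hgcof : ∀ c'', c'' < x → ∃ n, c'' < g n := by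
    intro c'' hc''
    obtain ⟨n, hn⟩ := cseq_cof hV.cof hc''
    refine ⟨n + 1, lt_of_lt_of_le hn (le_trans (le_max_right _ _) (le_of_lt (lt_osucc _)))⟩
  set S : Set Omega1 := F ∪ (range g ∪ {x}) with hS
  have hxS : x ∈ S := Or.inr (Or.inr rfl)
  have hncs : IsNCS Omega1 S := by
    refine ncs_gen hxS ((hV.fin.countable).union ((countable_range g).union
      (countable_singleton x))) ⟨c, hV.clt⟩ ?_ ?_ ?_ ?_
    · rintro y (hy | ⟨n, rfl⟩ | hy) hne
      · exact hV.sing y hy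
      · exact isOpen_singleton_osucc _
      · exact absurd hy hne
    · intro β hβ
      obtain ⟨n₀, hn₀⟩ := hgcof β hβ
      refine (hV.fin.union ((Set.finite_Iio n₀).image g)).subset ?_
      rintro z ⟨(hz | ⟨n, rfl⟩ | hz), hzb⟩
      · exact Or.inl hz
      · refine Or.inr ⟨n, ?_, rfl⟩
        by_contra h
        rw [mem_Iio, not_lt] at h
        exact absurd (le_trans (hgmono.monotone h) hzb) (not_le.2 hn₀)
      · rw [mem_singleton_iff] at hz
        subst hz
        exact absurd hzb (not_le.2 hβ)
    · refine hV.fin.subset ?_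
      rintro z ⟨(hz | ⟨n, rfl⟩ | hz), hzi⟩
      · exact hz
      · exact absurd (mem_Ioi.1 hzi) (not_lt.2 (le_of_lt (hglt n)))
      · rw [mem_singleton_iff] at hz
        subst hz
        exact absurd (mem_Ioi.1 hzi) (lt_irrefl _)
    · intro c'' hc''
      obtain ⟨n, hn⟩ := hgcof c'' hc''
      exact ⟨g n, Or.inr (Or.inl (mem_range_self n)), hn, hglt n⟩
  refine ⟨⟨S, hncs⟩, ?_, ?_⟩
  · intro f hf; exact Or.inl hf
  · rintro z (hz | ⟨n, rfl⟩ | hz)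
    · exact Or.inl hz
    · exact Or.inr ⟨hgc n, le_of_lt (hglt n)⟩
    · rw [mem_singleton_iff] at hz
      subst hz
      exact Or.inr ⟨hV.clt, le_rfl⟩


lemma core {D : Set (Sc Omega1)} (hD : IsOpen D) (T : Sc Omega1) (hTD : T ∈ D)
    {R : Set Omega1} (hR : IsOpen R) (hTR : T.1 ⊆ R)
    {E : Set Omega1} (hE : E ⊆ T.1)
    (γ : Omega1) (ψ : Omega1 → Omega1) (hψ : ∀ z, CofSeq z → ψ z < z) :
    ∃ (Q : Set Omega1) (c' x' : Omega1),
      Q.Finite ∧ (∀ f ∈ Q, IsOpen ({f} : Set Omega1)) ∧ Q ⊆ R ∧ c' ∈ Q ∧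
      c' < x' ∧ CofSeq x' ∧ ψ x' ≤ c' ∧ (γ < x' → γ < c') ∧
      x' ∈ T.1 ∧ (¬ ∃ U : Set Omega1, IsOpen U ∧ U ∩ T.1 = {x'}) ∧
      NBox (Q ∪ E) c' x' ⊆ D := by
  classical
  obtain ⟨G, hG, hDG⟩ := sc_open_extract hD
  have hTG : T.1 ∈ G := by rw [hDG] at hTD; exact hTD
  obtain ⟨U₀, 𝒰, hU₀, hTU₀, h𝒰, hcrit⟩ := vietoris_extract hG hTG
  obtain ⟨hinf, hcnt, hcl, x', ⟨hx'S, hconv⟩, hiso, hniso⟩ := T.2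
  -- there is something below x'
  have hy : ∃ y, y < x' := by
    by_contra h
    push_neg at h
    refine hniso ⟨{x'}, singleton_open_of_min (fun y hy => absurd hy (not_lt.2 (h y))), ?_⟩
    ext z
    simp only [mem_inter_iff, mem_singleton_iff]
    exact ⟨fun hz => hz.1, fun hz => ⟨hz, hz ▸ hx'S⟩⟩
  -- points of T.1 accumulate at x' from below
  have hstep : ∀ c'', c'' < x' → ∃ s ∈ T.1, c'' < s ∧ s < x' := by
    intro c'' h''
    have hne : Ioc c'' x' ∩ T.1 ≠ {x'} := fun heq => hniso ⟨Ioc c'' x', isOpen_Ioc' _ _, heq⟩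
    have hss : ({x'} : Set Omega1) ⊂ Ioc c'' x' ∩ T.1 :=
      ssubset_of_subset_of_ne (singleton_subset_iff.2 ⟨⟨h'', le_rfl⟩, hx'S⟩) (Ne.symm hne)
    obtain ⟨s, hs, hsne⟩ := exists_of_ssubset hss
    rw [mem_singleton_iff] at hsne
    exact ⟨s, hs.2, hs.1.1, lt_of_le_of_ne hs.1.2 hsne⟩
  have hcofx' : CofSeq x' := by
    obtain ⟨y, hy'⟩ := hy
    obtain ⟨s₀, hs₀T, hs₀1, hs₀2⟩ := hstep y hy'
    have hEc : (T.1 ∩ Iio x').Countable := hcnt.mono inter_subset_left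
    obtain ⟨fE, hfE⟩ := hEc.exists_eq_range ⟨s₀, hs₀T, hs₀2⟩
    refine ⟨fE, ?_, ?_⟩
    · intro n
      have : fE n ∈ T.1 ∩ Iio x' := by rw [hfE]; exact mem_range_self n
      exact this.2
    · intro c'' hc''
      obtain ⟨s, hsT, h1, h2⟩ := hstep c'' hc''
      have : s ∈ T.1 ∩ Iio x' := ⟨hsT, h2⟩
      rw [hfE] at this
      obtain ⟨n, rfl⟩ := this
      exact ⟨n, h1⟩
  have hx'U₀ : x' ∈ U₀ := hTU₀ hx'S
  have hx'R : x' ∈ R := hTR hx'S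
  obtain ⟨a₀, ha₀, hsub₀⟩ := exists_Ioc_subset_of_mem_nhds (hU₀.mem_nhds hx'U₀) hy
  obtain ⟨aR, haR, hsubR⟩ := exists_Ioc_subset_of_mem_nhds (hR.mem_nhds hx'R) hy
  -- pick representative points with open singletons in each member of 𝒰
  have hq : ∀ U ∈ 𝒰, ∃ v, v ∈ U ∧ v ∈ U₀ ∧ v ∈ R ∧ IsOpen ({v} : Set Omega1) := by
    intro U hU
    obtain ⟨hUopen, s, hsT, hsU⟩ := h𝒰 U hU
    have hW : IsOpen (U ∩ (U₀ ∩ R)) := hUopen.inter (hU₀.inter hR)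
    obtain ⟨v, hvW, hvop⟩ := exists_isOpen_singleton_mem hW ⟨hsU, hTU₀ hsT, hTR hsT⟩
    exact ⟨v, hvW.1, hvW.2.1, hvW.2.2, hvop⟩
  choose q hq1 hq2 hq3 hq4 using hq
  set Q₀ : Finset Omega1 := 𝒰.attach.image (fun U => q U.1 U.2) with hQ₀
  set M : Omega1 := max (max a₀ aR) (max (ψ x') (if γ < x' then γ else a₀)) with hM
  have hMlt : M < x' := by
    refine max_lt (max_lt ha₀ haR) (max_lt (hψ x' hcofx') ?_)
    split_ifs with h
    · exact h
    · exact ha₀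
  set c'' : Omega1 := osucc M with hc''def
  have hc'x : c'' < x' := osucc_lt_of_cofseq hcofx' hMlt
  have hMc : M < c'' := lt_osucc M
  have ha₀c : a₀ < c'' := lt_of_le_of_lt (le_trans (le_max_left _ _) (le_max_left _ _)) hMc
  have haRc : aR < c'' := lt_of_le_of_lt (le_trans (le_max_right _ _) (le_max_left _ _)) hMc
  have hψc : ψ x' ≤ c'' := le_of_lt (lt_of_le_of_lt (le_trans (le_max_left _ _) (le_max_right _ _)) hMc)
  have hγc : γ < x' → γ < c'' := by
    intro h
    refine lt_of_le_of_lt ?_ hMc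
    refine le_trans ?_ (le_max_right _ _)
    rw [if_pos h]
    exact le_max_right _ _
  set Q : Set Omega1 := insert c'' (↑Q₀ : Set Omega1) with hQ
  have hQfin : Q.Finite := (Q₀.finite_toSet).insert c''
  have hQsing : ∀ f ∈ Q, IsOpen ({f} : Set Omega1) := by
    rintro f (rfl | hf)
    · exact isOpen_singleton_osucc M
    · rw [Finset.mem_coe, hQ₀, Finset.mem_image] at hf
      obtain ⟨U, _, rfl⟩ := hf
      exact hq4 U.1 U.2
  have hQR : Q ⊆ R := by
    rintro f (rfl | hf)
    · exact hsubR ⟨haRc, le_of_lt hc'x⟩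
    · rw [Finset.mem_coe, hQ₀, Finset.mem_image] at hf
      obtain ⟨U, _, rfl⟩ := hf
      exact hq3 U.1 U.2
  refine ⟨Q, c'', x', hQfin, hQsing, hQR, mem_insert _ _, hc'x, hcofx', hψc, hγc, hx'S,
    hniso, ?_⟩
  rintro T' ⟨hsub1, hsub2⟩
  rw [hDG]
  refine hcrit T'.1 ?_ ?_
  · intro z hz
    rcases hsub2 hz with ((rfl | hzQ) | hzE) | hzI
    · exact hsub₀ ⟨ha₀c, le_of_lt hc'x⟩
    · rw [Finset.mem_coe, hQ₀, Finset.mem_image] at hzQ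
      obtain ⟨U, _, rfl⟩ := hzQ
      exact hq2 U.1 U.2
    · exact hTU₀ (hE hzE)
    · exact hsub₀ ⟨lt_trans ha₀c hzI.1, hzI.2⟩
  · intro U hU
    refine ⟨q U hU, hsub1 (Or.inl ?_), hq1 U hU⟩
    refine mem_insert_of_mem _ ?_
    rw [Finset.mem_coe, hQ₀, Finset.mem_image]
    exact ⟨⟨U, hU⟩, Finset.mem_attach _ _, rfl⟩


lemma isOpen_FIoc {F : Set Omega1} {c x : Omega1} (hV : VData F c x) :
    IsOpen (F ∪ Ioc c x) := by
  have : F ∪ Ioc c x = (⋃ f ∈ F, {f}) ∪ Ioc c x := by simp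
  rw [this]
  exact (isOpen_biUnion (fun f hf => hV.sing f hf)).union (isOpen_Ioc' c x)

def zeroOmega : Omega1 := ⟨0, aleph1_ord_isLimit.pos⟩

lemma base {D : Set (Sc Omega1)} (hD : IsOpen D) (hne : D.Nonempty) :
    ∃ F c x, VData F c x ∧ NBox F c x ⊆ D := by
  obtain ⟨T, hT⟩ := hne
  obtain ⟨Q, c', x', hfin, hsing, _, _, hcx, hcof, _, _, _, _, hbox⟩ :=
    core hD T hT isOpen_univ (subset_univ _) (empty_subset T.1) zeroOmega
      (fun z => cseq z 0) (fun z hz => cseq_lt hz 0)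
  rw [union_empty] at hbox
  exact ⟨Q, c', x', ⟨hfin, hsing, hcx, hcof⟩, hbox⟩

lemma step {D : Set (Sc Omega1)} (hD : IsOpen D) {F : Set Omega1} {c x : Omega1}
    (hV : VData F c x) (hne : (D ∩ NBox F c x).Nonempty) (ψ : Omega1 → Omega1)
    (hψ : ∀ z, CofSeq z → ψ z < z) :
    ∃ F' c' x', VData F' c' x' ∧ F ⊆ F' ∧ c' ∈ F' ∧ c < c' ∧ c' < x' ∧ x' ≤ x ∧
      ψ x' ≤ c' ∧ (F' \ F ⊆ Ioc c x) ∧ NBox F' c' x' ⊆ D ∩ NBox F c x := by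
  obtain ⟨T, hTD, hTF, hTsub⟩ := hne
  obtain ⟨Q, c', x', hfin, hsing, hQR, hcQ, hcx', hcof', hψ', hγ', hx'T, hniso', hbox⟩ :=
    core hD T hTD (isOpen_FIoc hV) hTsub hTF c ψ hψ
  have hx'F : x' ∉ F := by
    intro h
    refine hniso' ⟨{x'}, hV.sing x' h, ?_⟩
    ext z
    simp only [mem_inter_iff, mem_singleton_iff]
    exact ⟨fun hz => hz.1, fun hz => ⟨hz, hz ▸ hx'T⟩⟩
  have hx'Ioc : x' ∈ Ioc c x := (hTsub hx'T).resolve_left hx'F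
  have hcc' : c < c' := hγ' hx'Ioc.1
  refine ⟨Q ∪ F, c', x', ⟨hfin.union hV.fin, ?_, hcx', hcof'⟩, subset_union_right,
    Or.inl hcQ, hcc', hcx', hx'Ioc.2, hψ', ?_, ?_⟩
  · rintro f (hf | hf)
    · exact hsing f hf
    · exact hV.sing f hf
  · rintro z ⟨hz1 | hz1, hz2⟩
    · exact (hQR hz1).resolve_left hz2
    · exact absurd hz1 hz2
  · intro T' hT'
    refine ⟨hbox hT', fun f hf => hT'.1 (Or.inr hf), ?_⟩
    intro z hz
    rcases hT'.2 hz with (hzQ | hzF) | hzI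
    · exact hQR hzQ
    · exact Or.inl hzF
    · exact Or.inr ⟨lt_trans hcc' hzI.1, le_trans hzI.2 hx'Ioc.2⟩


lemma antitone_stab (x : ℕ → Omega1) (hx : Antitone x) :
    ∃ N, ∀ n, N ≤ n → x n = x N := by
  obtain ⟨m, ⟨N, rfl⟩, hmin⟩ := omega1_lt_wf.has_min (range x) ⟨x 0, mem_range_self 0⟩
  refine ⟨N, fun n hn => le_antisymm (hx hn) ?_⟩
  exact not_lt.1 (hmin (x n) (mem_range_self n))

/-- The main construction. -/
theorem baire_Sc : BaireSpace (Sc Omega1) := by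
  constructor
  intro f hfo hfd
  rw [dense_iff_inter_open]
  intro U hU hUne
  obtain ⟨F₀, c₀, x₀, hV₀, hB₀⟩ := base hU hUne
  have hstep : ∀ (n : ℕ) (p : {q : Set Omega1 × Omega1 × Omega1 // VData q.1 q.2.1 q.2.2}),
      ∃ q : Set Omega1 × Omega1 × Omega1, VData q.1 q.2.1 q.2.2 ∧ p.1.1 ⊆ q.1 ∧
        q.2.1 ∈ q.1 ∧ p.1.2.1 < q.2.1 ∧ q.2.1 < q.2.2 ∧ q.2.2 ≤ p.1.2.2 ∧
        Phi q.2.2 n ≤ q.2.1 ∧ (q.1 \ p.1.1 ⊆ Ioc p.1.2.1 p.1.2.2) ∧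
        NBox q.1 q.2.1 q.2.2 ⊆ f n ∩ NBox p.1.1 p.1.2.1 p.1.2.2 := by
    rintro n ⟨⟨F, c, x⟩, hV⟩
    obtain ⟨Tw, hTw⟩ := nbox_nonempty hV
    have hbne0 := dense_iff_inter_open.1 (hfd n) _ (nbox_isOpen hV) ⟨Tw, hTw⟩
    have hbne : (f n ∩ NBox F c x).Nonempty := by rwa [inter_comm] at hbne0
    obtain ⟨F', c', x', h1, h2, h3, h4, h5, h6, h7, h8, h9⟩ :=
      step (hfo n) hV hbne (fun z => Phi z n) (fun z hz => Phi_lt hz n)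
    exact ⟨(F', c', x'), h1, h2, h3, h4, h5, h6, h7, h8, h9⟩
  obtain ⟨g, hg0, hgs⟩ : ∃ g : ℕ → {q : Set Omega1 × Omega1 × Omega1 // VData q.1 q.2.1 q.2.2},
      g 0 = ⟨(F₀, c₀, x₀), hV₀⟩ ∧ ∀ n,
        (g n).1.1 ⊆ (g (n+1)).1.1 ∧ (g (n+1)).1.2.1 ∈ (g (n+1)).1.1 ∧
        (g n).1.2.1 < (g (n+1)).1.2.1 ∧ (g (n+1)).1.2.1 < (g (n+1)).1.2.2 ∧
        (g (n+1)).1.2.2 ≤ (g n).1.2.2 ∧ Phi ((g (n+1)).1.2.2) n ≤ (g (n+1)).1.2.1 ∧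
        ((g (n+1)).1.1 \ (g n).1.1 ⊆ Ioc ((g n).1.2.1) ((g n).1.2.2)) ∧
        NBox ((g (n+1)).1.1) ((g (n+1)).1.2.1) ((g (n+1)).1.2.2) ⊆
          f n ∩ NBox ((g n).1.1) ((g n).1.2.1) ((g n).1.2.2) := by
    refine ⟨fun n => Nat.rec ⟨(F₀, c₀, x₀), hV₀⟩
      (fun n p => ⟨(hstep n p).choose, (hstep n p).choose_spec.1⟩) n, rfl, fun n => ?_⟩
    exact (hstep n _).choose_spec.2
  -- abbreviations through haves
  have hVn : ∀ n, VData ((g n).1.1) ((g n).1.2.1) ((g n).1.2.2) := fun n => (g n).2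
  have hFsub : ∀ n, (g n).1.1 ⊆ (g (n+1)).1.1 := fun n => (hgs n).1
  have hcF : ∀ n, (g (n+1)).1.2.1 ∈ (g (n+1)).1.1 := fun n => (hgs n).2.1
  have hcmono : StrictMono (fun n => (g n).1.2.1) :=
    strictMono_nat_of_lt_succ (fun n => (hgs n).2.2.1)
  have hxanti : Antitone (fun n => (g n).1.2.2) :=
    antitone_nat_of_succ_le (fun n => (hgs n).2.2.2.2.1)
  have hPhi : ∀ n, Phi ((g (n+1)).1.2.2) n ≤ (g (n+1)).1.2.1 := fun n => (hgs n).2.2.2.2.2.1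
  have hnew : ∀ n, (g (n+1)).1.1 \ (g n).1.1 ⊆ Ioc ((g n).1.2.1) ((g n).1.2.2) :=
    fun n => (hgs n).2.2.2.2.2.2.1
  have hBsub : ∀ n, NBox ((g (n+1)).1.1) ((g (n+1)).1.2.1) ((g (n+1)).1.2.2) ⊆
      f n ∩ NBox ((g n).1.1) ((g n).1.2.1) ((g n).1.2.2) := fun n => (hgs n).2.2.2.2.2.2.2
  have hFmono : ∀ {m n : ℕ}, m ≤ n → (g m).1.1 ⊆ (g n).1.1 := by
    intro m n h
    induction h with
    | refl => exact subset_rfl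
    | step h ih => exact ih.trans (hFsub _)
  -- stabilization of the x-sequence
  obtain ⟨N, hN⟩ := antitone_stab (fun n => (g n).1.2.2) hxanti
  set xs : Omega1 := (g N).1.2.2 with hxs
  have hxle : ∀ n, xs ≤ (g n).1.2.2 := by
    intro n
    rcases le_total n N with h | h
    · exact hxanti h
    · exact le_of_eq (hN n h).symm
  have hclt : ∀ n, (g n).1.2.1 < xs := by
    intro n
    calc (g n).1.2.1 ≤ (g (max n N)).1.2.1 := hcmono.monotone (le_max_left n N)
    _ < (g (max n N)).1.2.2 := (hVn (max n N)).clt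
    _ = xs := hN _ (le_max_right n N)
  have hcofxs : CofSeq xs := (hVn N).cof
  have hsupc : ∀ β, β < xs → ∃ m, β < (g m).1.2.1 := by
    intro β hβ
    obtain ⟨k, hk⟩ := Phi_cof hcofxs hβ
    set n := max k N with hn
    refine ⟨n + 1, ?_⟩
    have hxeq : (g (n+1)).1.2.2 = xs := hN _ (le_trans (le_max_right k N) (Nat.le_succ_of_le le_rfl))
    calc β < Phi xs k := hk
    _ ≤ Phi xs n := Phi_mono xs (le_max_left k N)
    _ = Phi ((g (n+1)).1.2.2) n := by rw [hxeq]
    _ ≤ (g (n+1)).1.2.1 := hPhi n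
  set Sstar : Set Omega1 := (⋃ n, (g n).1.1) ∪ {xs} with hSstar
  have hxsS : xs ∈ Sstar := Or.inr rfl
  -- S* is located in each box
  have hlocA : ∀ n j, (g (n + j)).1.1 ⊆ (g n).1.1 ∪ Ioc ((g n).1.2.1) ((g n).1.2.2) := by
    intro n j
    induction j with
    | zero => exact subset_union_left
    | succ j ih =>
      intro z hz
      by_cases h : z ∈ (g (n + j)).1.1
      · exact ih h
      · have := hnew (n + j) ⟨hz, h⟩
        exact Or.inr ⟨lt_of_le_of_lt (hcmono.monotone (Nat.le_add_right n j)) this.1,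
          le_trans this.2 (hxanti (Nat.le_add_right n j))⟩
  have hlocA' : ∀ n k, (g k).1.1 ⊆ (g n).1.1 ∪ Ioc ((g n).1.2.1) ((g n).1.2.2) := by
    intro n k
    rcases le_total k n with h | h
    · exact (hFmono h).trans subset_union_left
    · have : k = n + (k - n) := by omega
      rw [this]
      exact hlocA n (k - n)
  have hmem : ∀ n, (g n).1.1 ⊆ Sstar ∧
      Sstar ⊆ (g n).1.1 ∪ Ioc ((g n).1.2.1) ((g n).1.2.2) := by
    intro n
    constructor
    · exact (subset_iUnion (fun n => (g n).1.1) n).trans subset_union_left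
    · rintro z (hz | hz)
      · obtain ⟨k, hk⟩ := mem_iUnion.1 hz
        exact hlocA' n k hk
      · rw [mem_singleton_iff] at hz
        subst hz
        exact Or.inr ⟨hclt n, hxle n⟩
  -- S* is an NCS
  have hncs : IsNCS Omega1 Sstar := by
    refine ncs_gen hxsS ?_ ⟨(g 0).1.2.1, hclt 0⟩ ?_ ?_ ?_ ?_
    · exact (countable_iUnion fun n => ((hVn n).fin).countable).union (countable_singleton _)
    · rintro y (hy | hy) hne
      · obtain ⟨k, hk⟩ := mem_iUnion.1 hy
        exact (hVn k).sing y hk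
      · exact absurd hy hne
    · intro β hβ
      obtain ⟨m, hm⟩ := hsupc β hβ
      have claim : ∀ j, ∀ z ∈ (g (m + j)).1.1, z ≤ β → z ∈ (g m).1.1 := by
        intro j
        induction j with
        | zero => exact fun z hz _ => hz
        | succ j ih =>
          intro z hz hzb
          by_cases h : z ∈ (g (m + j)).1.1
          · exact ih z h hzb
          · have := (hnew (m + j) ⟨hz, h⟩).1
            have h2 : (g m).1.2.1 ≤ (g (m + j)).1.2.1 := hcmono.monotone (Nat.le_add_right m j)
            exact absurd (le_trans (le_of_lt (lt_of_le_of_lt h2 this)) hzb) (not_le.2 hm)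
      refine ((hVn m).fin).subset ?_
      rintro z ⟨(hz | hz), hzb⟩
      · obtain ⟨k, hk⟩ := mem_iUnion.1 hz
        rcases le_total k m with h | h
        · exact hFmono h hk
        · have : k = m + (k - m) := by omega
          rw [this] at hk
          exact claim (k - m) z hk hzb
      · rw [mem_singleton_iff] at hz
        subst hz
        exact absurd (le_trans (mem_Iic.1 hzb) (le_of_lt hm)) (not_le.2 (hclt m))
    · have claim : ∀ j, ∀ z ∈ (g (N + j)).1.1, xs < z → z ∈ (g N).1.1 := by
        intro j
        induction j with
        | zero => exact fun z hz _ => hz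
        | succ j ih =>
          intro z hz hzx
          by_cases h : z ∈ (g (N + j)).1.1
          · exact ih z h hzx
          · have := (hnew (N + j) ⟨hz, h⟩).2
            rw [hN (N + j) (Nat.le_add_right N j)] at this
            exact absurd this (not_le.2 hzx)
      refine ((hVn N).fin).subset ?_
      rintro z ⟨(hz | hz), hzi⟩
      · obtain ⟨k, hk⟩ := mem_iUnion.1 hz
        rcases le_total k N with h | h
        · exact hFmono h hk
        · have : k = N + (k - N) := by omega
          rw [this] at hk
          exact claim (k - N) z hk (mem_Ioi.1 hzi)
      · rw [mem_singleton_iff] at hz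
        subst hz
        exact absurd (mem_Ioi.1 hzi) (lt_irrefl _)
    · intro c'' hc''
      obtain ⟨m, hm⟩ := hsupc c'' hc''
      refine ⟨(g (m + 1)).1.2.1, ?_, ?_, hclt (m + 1)⟩
      · exact Or.inl (mem_iUnion.2 ⟨m + 1, hcF m⟩)
      · exact lt_of_lt_of_le hm (hcmono.monotone (Nat.le_succ m))
  -- conclusion
  set Tstar : Sc Omega1 := ⟨Sstar, hncs⟩ with hTstar
  have hTB : ∀ n, Tstar ∈ NBox ((g n).1.1) ((g n).1.2.1) ((g n).1.2.2) := by
    intro n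
    exact ⟨(hmem n).1, (hmem n).2⟩
  refine ⟨Tstar, ?_, ?_⟩
  · have h0 := hTB 0
    rw [hg0] at h0
    exact hB₀ h0
  · rw [mem_iInter]
    intro n
    exact (hBsub n (hTB (n + 1))).1

end
end Stmt15Aux

/-- The hyperspace `S_c(ω₁)` of nontrivial convergent sequences of the
ordinal space `ω₁` with the order topology is a Baire space. -/
theorem stmt15 : BaireSpace (Sc Omega1) := Stmt15Aux.baire_Sc
end
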